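/- arXiv:1602.01716 — 8 statements merged into one kernel-verified Lean document; each statement's English description precedes it below -/
import Mathlib

section
/- Let the DPC-G iterates be defined as follows: given y_0 ∈ E and a sequence of symmetric positive semidefinite linear maps H_k on E satisfying ‖id − (∇²_y F(t_k, y_k)) ∘ H_k‖ ≤ ε for all k (operator norm), set y_{k+1|k} := y_k − h · H_k (∂_t ∇_y F(t_k, y_k)) (prediction) and y_{k+1} := y_{k+1|k} − γ ∇_y F(t_{k+1}, y_{k+1|k}) (gradient correction). Define ρ := max(|1 − γm|, |1 − γL'|). If 0 < γ < 2/L' (so that ρ < 1), then for every k ≥ 0: ‖y_k − y*(t_k)‖ ≤ ρ^k ‖y_0 − y*(t_0)‖ + ρ · (2hC0/m + hC0ε/m + h²Δ) · (1 − ρ^k)/(1 − ρ). In particular limsup_{k→∞} ‖y_k − y*(t_k)‖ ≤ ρ/(1−ρ) · (2hC0/m + hC0ε/m + h²Δ). -/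
/-!
Write `e_k := ‖y_k - y*(t_k)‖`. Three estimates give `e_{k+1} ≤ ρ (e_k + 2hC0/m + hC0ε/m)`:
the minimiser drifts by at most `hC0/m` per sampling period, because `∇F(t, ·)` is
`m`-strongly monotone while `t ↦ ∇F(t, y)` is `C0`-Lipschitz; the prediction moves by at most
`h(1 + ε)C0/m`, because `‖∇²F ∘ H_k‖ ≤ 1 + ε` and `∇²F ≥ m`; and the correction
`y ↦ y - γ∇F(t, y)` is a `ρ`-contraction, its derivative `I - γ∇²F` being symmetric with
spectrum in `[1 - γL', 1 - γm]`. Unrolling the recursion gives the geometric bound, and the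
`limsup` bound follows from `ρ^k → 0`.
-/

open scoped InnerProductSpace

local notation "E" n => EuclideanSpace ℝ (Fin n)

open Filter Topology

section InnerProductSpace

variable {V : Type*} [NormedAddCommGroup V] [InnerProductSpace ℝ V]

namespace ContinuousLinearMap

theorem norm_le_of_abs_inner_self_le {T : V →L[ℝ] V} (hT : T.IsSymmetric) {C : ℝ}
    (hC : 0 ≤ C) (hbound : ∀ v, |⟪T v, v⟫_ℝ| ≤ C * ‖v‖ ^ 2) : ‖T‖ ≤ C := by
  rw [T.norm_eq_iSup_rayleighQuotient hT]
  refine ciSup_le fun v => ?_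
  rw [rayleighQuotient, reApplyInnerSelf_apply, RCLike.re_to_real, abs_div, abs_sq]
  exact div_le_of_le_mul₀ (sq_nonneg _) hC (hbound v)

theorem norm_id_sub_smul_le {A : V →L[ℝ] V} (hA : A.IsSymmetric) {m L γ : ℝ}
    (hm : ∀ v, m * ‖v‖ ^ 2 ≤ ⟪A v, v⟫_ℝ) (hL : ∀ v, ⟪A v, v⟫_ℝ ≤ L * ‖v‖ ^ 2) (hγ : 0 ≤ γ) :
    ‖ContinuousLinearMap.id ℝ V - γ • A‖ ≤ max |1 - γ * m| |1 - γ * L| := by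
  have hsymm : (ContinuousLinearMap.id ℝ V - γ • A).IsSymmetric := by
    simpa using LinearMap.IsSymmetric.id.sub (hA.smul (conj_trivial γ))
  refine norm_le_of_abs_inner_self_le hsymm ((abs_nonneg _).trans (le_max_left _ _)) fun v => ?_
  have hquad : ⟪(ContinuousLinearMap.id ℝ V - γ • A) v, v⟫_ℝ = ‖v‖ ^ 2 - γ * ⟪A v, v⟫_ℝ := by
    simp [inner_sub_left, real_inner_smul_left]
  have hupper := mul_le_mul_of_nonneg_left (hm v) hγ
  have hlower := mul_le_mul_of_nonneg_left (hL v) hγ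
  have hm_abs := mul_le_mul_of_nonneg_right
    ((le_abs_self (1 - γ * m)).trans (le_max_left _ |1 - γ * L|)) (sq_nonneg ‖v‖)
  have hL_abs := mul_le_mul_of_nonneg_right
    ((neg_abs_le (1 - γ * L)).trans' (neg_le_neg (le_max_right |1 - γ * m| _)))
    (sq_nonneg ‖v‖)
  rw [hquad, abs_le]
  constructor <;> nlinarith

end ContinuousLinearMap

theorem mul_norm_le_norm_of_mul_sq_le_inner {m : ℝ} {u x : V}
    (h : m * ‖x‖ ^ 2 ≤ ⟪u, x⟫_ℝ) : m * ‖x‖ ≤ ‖u‖ := by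
  rcases (norm_nonneg x).eq_or_lt with hx | hx
  · rw [← hx, mul_zero]
    exact norm_nonneg u
  · refine le_of_mul_le_mul_right ?_ hx
    nlinarith [real_inner_le_norm u x]

theorem mul_norm_sub_sq_le_inner_sub {g : V → V} {A : V → V →L[ℝ] V} {m : ℝ}
    (hg : ∀ y, HasFDerivAt g (A y) y) (hm : ∀ y v, m * ‖v‖ ^ 2 ≤ ⟪A y v, v⟫_ℝ) (a b : V) :
    m * ‖a - b‖ ^ 2 ≤ ⟪g a - g b, a - b⟫_ℝ := by
  set c := a - b
  let φ : ℝ → ℝ := fun s => ⟪c, g (b + s • c)⟫_ℝ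
  have hline (s : ℝ) : HasDerivAt (fun s : ℝ => b + s • c) c s := by
    simpa using ((hasDerivAt_id s).smul_const c).const_add b
  have hφ (s : ℝ) : HasDerivAt φ ⟪c, A (b + s • c) c⟫_ℝ s :=
    (innerSL ℝ c).hasFDerivAt.comp_hasDerivAt s ((hg _).comp_hasDerivAt s (hline s))
  have hmvt := mul_sub_le_image_sub_of_le_deriv (fun s => (hφ s).differentiableAt)
    (fun s => (hφ s).deriv ▸ real_inner_comm c _ ▸ hm _ c) zero_le_one
  simpa [φ, c, inner_sub_left, inner_sub_right, real_inner_comm c] using hmvt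

theorem isSymmetric_of_hasGradientAt [CompleteSpace V] {f : V → ℝ} {g : V → V}
    {A : V → V →L[ℝ] V} (hf : ∀ y, HasGradientAt f (g y) y) (hg : ∀ y, HasFDerivAt g (A y) y)
    (y : V) : (A y).IsSymmetric := by
  let D := (InnerProductSpace.toDual ℝ V).toContinuousLinearEquiv.toContinuousLinearMap
  have hsymm := second_derivative_symmetric (fun z => (hf z).hasFDerivAt)
    (D.hasFDerivAt.comp y (hg y))
  intro v w
  simpa [D, InnerProductSpace.toDual_apply_apply, real_inner_comm] using hsymm v w

theorem IsLocalMin.hasGradientAt_eq_zero [CompleteSpace V] {f : V → ℝ} {a g : V}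
    (h : IsLocalMin f a) (hf : HasGradientAt f g a) : g = 0 := by
  simpa using h.hasFDerivAt_eq_zero hf.hasFDerivAt

theorem norm_sub_smul_sub_sub_smul_le {g : V → V} {A : V → V →L[ℝ] V} {m L γ : ℝ}
    (hg : ∀ y, HasFDerivAt g (A y) y) (hA : ∀ y, (A y).IsSymmetric)
    (hm : ∀ y v, m * ‖v‖ ^ 2 ≤ ⟪A y v, v⟫_ℝ) (hL : ∀ y v, ⟪A y v, v⟫_ℝ ≤ L * ‖v‖ ^ 2)
    (hγ : 0 ≤ γ) (x z : V) :
    ‖(x - γ • g x) - (z - γ • g z)‖ ≤ max |1 - γ * m| |1 - γ * L| * ‖x - z‖ := by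
  have hstep (w : V) :
      HasFDerivAt (fun y => y - γ • g y) (ContinuousLinearMap.id ℝ V - γ • A w) w :=
    (hasFDerivAt_id w).sub ((hg w).const_smul γ)
  simpa using convex_univ.norm_image_sub_le_of_norm_hasFDerivWithin_le
    (fun w _ => (hstep w).hasFDerivWithinAt)
    (fun w _ => (A w).norm_id_sub_smul_le (hA w) (hm w) (hL w) hγ) (Set.mem_univ z)
    (Set.mem_univ x)

theorem norm_apply_le_of_norm_id_sub_comp_le {A H : V →L[ℝ] V} {m ε : ℝ} (hm0 : 0 < m)
    (hm : ∀ v, m * ‖v‖ ^ 2 ≤ ⟪A v, v⟫_ℝ) (hH : ‖ContinuousLinearMap.id ℝ V - A.comp H‖ ≤ ε)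
    (v : V) : ‖H v‖ ≤ (1 + ε) * ‖v‖ / m := by
  have hAH : ‖A.comp H‖ ≤ 1 + ε := calc
    ‖A.comp H‖ = ‖ContinuousLinearMap.id ℝ V - (ContinuousLinearMap.id ℝ V - A.comp H)‖ := by
      rw [sub_sub_cancel]
    _ ≤ 1 + ε := (norm_sub_le _ _).trans (add_le_add ContinuousLinearMap.norm_id_le hH)
  rw [le_div_iff₀' hm0]
  calc m * ‖H v‖ ≤ ‖A (H v)‖ := mul_norm_le_norm_of_mul_sq_le_inner (hm (H v))
    _ ≤ ‖A.comp H‖ * ‖v‖ := (A.comp H).le_opNorm v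
    _ ≤ (1 + ε) * ‖v‖ := by gcongr

theorem mul_norm_sub_le_of_apply_eq_zero {g : ℝ → V → V} {A : ℝ → V → V →L[ℝ] V}
    {g' : ℝ → V → V} {x : ℝ → V} {m C : ℝ}
    (hgA : ∀ t y, HasFDerivAt (g t) (A t y) y) (hm : ∀ t y v, m * ‖v‖ ^ 2 ≤ ⟪A t y v, v⟫_ℝ)
    (hg' : ∀ t y, HasDerivAt (fun s => g s y) (g' t y) t) (hC : ∀ t y, ‖g' t y‖ ≤ C)
    (hx : ∀ t, g t (x t) = 0) (t t' : ℝ) : m * ‖x t - x t'‖ ≤ C * |t - t'| := calc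
  m * ‖x t - x t'‖ ≤ ‖g t (x t) - g t (x t')‖ :=
    mul_norm_le_norm_of_mul_sq_le_inner (mul_norm_sub_sq_le_inner_sub (hgA t) (hm t) _ _)
  _ = ‖g t (x t') - g t' (x t')‖ := by rw [hx, hx, zero_sub, sub_zero, norm_neg]
  _ ≤ C * |t - t'| := by
    simpa [Real.norm_eq_abs] using convex_univ.norm_image_sub_le_of_norm_hasDerivWithin_le
      (fun s _ => (hg' s (x t')).hasDerivWithinAt) (fun s _ => hC s (x t')) (Set.mem_univ t')
      (Set.mem_univ t)

theorem norm_sub_smul_apply_sub_le {A H : V →L[ℝ] V} {m ε C h : ℝ} {x x₀ x₁ v : V} (hm0 : 0 < m)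
    (hm : ∀ w, m * ‖w‖ ^ 2 ≤ ⟪A w, w⟫_ℝ) (hH : ‖ContinuousLinearMap.id ℝ V - A.comp H‖ ≤ ε)
    (hv : ‖v‖ ≤ C) (hh : 0 ≤ h) (hx : ‖x₀ - x₁‖ ≤ h * C / m) :
    ‖(x - h • H v) - x₁‖ ≤ ‖x - x₀‖ + (2 * h * C / m + h * C * ε / m) := by
  have hε : 0 ≤ 1 + ε := by linarith [(norm_nonneg _).trans hH]
  have hHv : ‖H v‖ ≤ (1 + ε) * C / m :=
    (norm_apply_le_of_norm_id_sub_comp_le hm0 hm hH v).trans (by gcongr)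
  calc ‖(x - h • H v) - x₁‖ = ‖(x - x₀) + (x₀ - x₁) - h • H v‖ := by congr 1; abel
    _ ≤ ‖x - x₀‖ + ‖x₀ - x₁‖ + h * ‖H v‖ := by
      grw [norm_sub_le, norm_add_le, norm_smul, Real.norm_of_nonneg hh]
    _ ≤ ‖x - x₀‖ + h * C / m + h * ((1 + ε) * C / m) := by gcongr
    _ = ‖x - x₀‖ + (2 * h * C / m + h * C * ε / m) := by ring

end InnerProductSpace

theorem max_abs_one_sub_mul_lt_one {γ m L : ℝ} (hγ : 0 < γ) (hm : 0 < m) (hmL : m ≤ L)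
    (hγL : γ * L < 2) : max |1 - γ * m| |1 - γ * L| < 1 := by
  have hγm : γ * m ≤ γ * L := by gcongr
  apply max_lt <;> rw [abs_lt] <;> constructor <;> nlinarith

theorem le_pow_mul_add_geom_of_le_mul_add {d : ℕ → ℝ} {ρ B : ℝ} (hρ0 : 0 ≤ ρ) (hρ1 : ρ ≠ 1)
    (h : ∀ k, d (k + 1) ≤ ρ * (d k + B)) (k : ℕ) :
    d k ≤ ρ ^ k * d 0 + ρ * B * (1 - ρ ^ k) / (1 - ρ) := by
  induction k with
  | zero => simp
  | succ k ih =>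
    have h1ρ : 1 - ρ ≠ 0 := sub_ne_zero.mpr hρ1.symm
    calc d (k + 1) ≤ ρ * (d k + B) := h k
      _ ≤ ρ * (ρ ^ k * d 0 + ρ * B * (1 - ρ ^ k) / (1 - ρ) + B) := by gcongr
      _ = ρ ^ (k + 1) * d 0 + ρ * B * (1 - ρ ^ (k + 1)) / (1 - ρ) := by
        field_simp
        ring

theorem limsup_le_of_le_mul_add {d : ℕ → ℝ} {ρ B : ℝ} (hd : ∀ k, 0 ≤ d k) (hρ0 : 0 ≤ ρ)
    (hρ1 : ρ < 1) (hB : 0 ≤ B) (h : ∀ k, d (k + 1) ≤ ρ * (d k + B)) :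
    limsup d atTop ≤ ρ / (1 - ρ) * B := by
  have h1ρ : 0 < 1 - ρ := sub_pos.mpr hρ1
  have hbound (k : ℕ) : d k ≤ ρ ^ k * d 0 + ρ / (1 - ρ) * B := by
    have hgeom : ρ * B * (1 - ρ ^ k) / (1 - ρ) ≤ ρ / (1 - ρ) * B := by
      rw [show ρ * B * (1 - ρ ^ k) / (1 - ρ) = ρ / (1 - ρ) * B * (1 - ρ ^ k) by ring]
      exact mul_le_of_le_one_right (by positivity) (sub_le_self _ (pow_nonneg hρ0 k))
    linarith [le_pow_mul_add_geom_of_le_mul_add hρ0 hρ1.ne h k]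
  have hlim : Tendsto (fun k => ρ ^ k * d 0 + ρ / (1 - ρ) * B) atTop (𝓝 (ρ / (1 - ρ) * B)) := by
    simpa using ((tendsto_pow_atTop_nhds_zero_of_lt_one hρ0 hρ1).mul_const (d 0)).add_const
      (ρ / (1 - ρ) * B)
  calc limsup d atTop ≤ limsup (fun k => ρ ^ k * d 0 + ρ / (1 - ρ) * B) atTop :=
        limsup_le_limsup (.of_forall hbound) (isCoboundedUnder_le_of_le atTop hd)
          hlim.isBoundedUnder_le
    _ = ρ / (1 - ρ) * B := hlim.limsup_eq

theorem stmt_0_general {n : ℕ}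
    (F : ℝ → (E n) → ℝ)
    (Fgrad : ℝ → (E n) → (E n))
    (Hess : ℝ → (E n) → (E n) →L[ℝ] (E n))
    (Gt : ℝ → (E n) → (E n))
    (m L' C0 C1 C2 C3 : ℝ)
    (hm : 0 < m) (hmL : m ≤ L')
    (hC0 : 0 ≤ C0) (hC1 : 0 ≤ C1) (hC2 : 0 ≤ C2) (hC3 : 0 ≤ C3)
    (hgrad : ∀ t y, HasGradientAt (F t) (Fgrad t y) y)
    (hhess : ∀ t y, HasFDerivAt (Fgrad t) (Hess t y) y)
    (ht : ∀ t y, HasDerivAt (fun s => Fgrad s y) (Gt t y) t)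
    (hstrong : ∀ t y (v : E n), m * ‖v‖ ^ 2 ≤ ⟪Hess t y v, v⟫_ℝ)
    (hsmooth : ∀ t y (v : E n), ⟪Hess t y v, v⟫_ℝ ≤ L' * ‖v‖ ^ 2)
    (hC0b : ∀ t y, ‖Gt t y‖ ≤ C0)
    (ystar : ℝ → E n)
    (hmin : ∀ t, IsMinOn (F t) Set.univ (ystar t))
    (h γ ε Δ ρ : ℝ) (hh : 0 < h) (hε : 0 ≤ ε)
    (hγ : 0 < γ) (hγ2 : γ < 2 / L')
    (hΔ : Δ = C0 ^ 2 * C1 / (2 * m ^ 3) + C0 * C2 / m ^ 2 + C3 / (2 * m))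
    (hρ : ρ = max |1 - γ * m| |1 - γ * L'|)
    (tk : ℕ → ℝ) (htk : ∀ k : ℕ, tk k = k * h)
    (y ypred : ℕ → E n)
    (H : ℕ → (E n) →L[ℝ] (E n))
    (hHerr : ∀ k, ‖ContinuousLinearMap.id ℝ (E n) - (Hess (tk k) (y k)).comp (H k)‖ ≤ ε)
    (hpred : ∀ k, ypred k = y k - h • H k (Gt (tk k) (y k)))
    (hcorr : ∀ k, y (k + 1) = ypred k - γ • Fgrad (tk (k + 1)) (ypred k)) :
    (∀ k : ℕ, ‖y k - ystar (tk k)‖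
        ≤ ρ ^ k * ‖y 0 - ystar (tk 0)‖
          + ρ * (2 * h * C0 / m + h * C0 * ε / m + h ^ 2 * Δ) * (1 - ρ ^ k) / (1 - ρ))
    ∧ Filter.limsup (fun k => ‖y k - ystar (tk k)‖) Filter.atTop
        ≤ ρ / (1 - ρ) * (2 * h * C0 / m + h * C0 * ε / m + h ^ 2 * Δ) := by
  have hρ0 : 0 ≤ ρ := hρ ▸ (abs_nonneg _).trans (le_max_left _ _)
  have hρ1 : ρ < 1 := hρ ▸ max_abs_one_sub_mul_lt_one hγ hm hmL
    ((lt_div_iff₀ (hm.trans_le hmL)).mp hγ2)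
  have hΔ0 : 0 ≤ Δ := by rw [hΔ]; positivity
  have hcrit (t : ℝ) : Fgrad t (ystar t) = 0 :=
    ((hmin t).isLocalMin univ_mem).hasGradientAt_eq_zero (hgrad t _)
  have hdrift (k : ℕ) : ‖ystar (tk k) - ystar (tk (k + 1))‖ ≤ h * C0 / m := by
    have hdt : |tk k - tk (k + 1)| = h := by
      rw [htk, htk, Nat.cast_succ, show (k : ℝ) * h - (k + 1) * h = -h by ring, abs_neg,
        abs_of_pos hh]
    rw [le_div_iff₀' hm, mul_comm h, ← hdt]
    exact mul_norm_sub_le_of_apply_eq_zero hhess hstrong ht hC0b hcrit _ _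
  have hstep (k : ℕ) : ‖y (k + 1) - ystar (tk (k + 1))‖
      ≤ ρ * (‖y k - ystar (tk k)‖ + (2 * h * C0 / m + h * C0 * ε / m + h ^ 2 * Δ)) := calc
    ‖y (k + 1) - ystar (tk (k + 1))‖
        = ‖(ypred k - γ • Fgrad (tk (k + 1)) (ypred k))
          - (ystar (tk (k + 1)) - γ • Fgrad (tk (k + 1)) (ystar (tk (k + 1))))‖ := by
      rw [hcorr, hcrit, smul_zero, sub_zero]
    _ ≤ ρ * ‖ypred k - ystar (tk (k + 1))‖ :=
      hρ ▸ norm_sub_smul_sub_sub_smul_le (hhess _)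
        (isSymmetric_of_hasGradientAt (hgrad _) (hhess _)) (hstrong _) (hsmooth _) hγ.le _ _
    _ ≤ ρ * (‖y k - ystar (tk k)‖ + (2 * h * C0 / m + h * C0 * ε / m)) := by
      rw [hpred]
      gcongr
      exact norm_sub_smul_apply_sub_le hm (hstrong _ _) (hHerr k) (hC0b _ _) hh.le (hdrift k)
    _ ≤ ρ * (‖y k - ystar (tk k)‖ + (2 * h * C0 / m + h * C0 * ε / m + h ^ 2 * Δ)) := by
      gcongr ρ * (_ + ?_)
      exact le_add_of_nonneg_right (by positivity)
  exact ⟨le_pow_mul_add_geom_of_le_mul_add hρ0 hρ1.ne hstep,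
    limsup_le_of_le_mul_add (fun k => norm_nonneg _) hρ0 hρ1 (by positivity) hstep⟩

/-- Theorem 1, part i, decentralized form: DPC-G iterates
converge Q-linearly with rate ρ, for any sampling period h, up to an
asymptotic error O(h) + O(hε) + O(h²), where ε bounds the Hessian-inverse
approximation error of the prediction step. -/
theorem stmt_0 {n : ℕ} (hn : 1 ≤ n)
    (F : ℝ → (E n) → ℝ)
    (Fgrad : ℝ → (E n) → (E n))
    (Hess : ℝ → (E n) → (E n) →L[ℝ] (E n))
    (Gt Gtt : ℝ → (E n) → (E n))
    (m L' C0 C1 C2 C3 : ℝ)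
    (hm : 0 < m) (hmL : m ≤ L')
    (hC0 : 0 ≤ C0) (hC1 : 0 ≤ C1) (hC2 : 0 ≤ C2) (hC3 : 0 ≤ C3)
    (hF2 : ∀ t, ContDiff ℝ 2 (F t))
    (hG1 : ContDiff ℝ 1 (Function.uncurry Fgrad))
    (hgrad : ∀ t y, HasGradientAt (F t) (Fgrad t y) y)
    (hhess : ∀ t y, HasFDerivAt (Fgrad t) (Hess t y) y)
    (ht : ∀ t y, HasDerivAt (fun s => Fgrad s y) (Gt t y) t)
    (htt : ∀ t y, HasDerivAt (fun s => Gt s y) (Gtt t y) t)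
    (hstrong : ∀ t y (v : E n), m * ‖v‖ ^ 2 ≤ ⟪Hess t y v, v⟫_ℝ)
    (hsmooth : ∀ t y (v : E n), ⟪Hess t y v, v⟫_ℝ ≤ L' * ‖v‖ ^ 2)
    (hC0b : ∀ t y, ‖Gt t y‖ ≤ C0)
    (hC1b : ∀ t y y', ‖Hess t y - Hess t y'‖ ≤ C1 * ‖y - y'‖)
    (hC2b : ∀ t y y', ‖Gt t y - Gt t y'‖ ≤ C2 * ‖y - y'‖)
    (hC3b : ∀ t y, ‖Gtt t y‖ ≤ C3)
    (ystar : ℝ → E n)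
    (hmin : ∀ t, IsMinOn (F t) Set.univ (ystar t))
    (h γ ε Δ ρ : ℝ) (hh : 0 < h) (hε : 0 ≤ ε)
    (hγ : 0 < γ) (hγ2 : γ < 2 / L')
    (hΔ : Δ = C0 ^ 2 * C1 / (2 * m ^ 3) + C0 * C2 / m ^ 2 + C3 / (2 * m))
    (hρ : ρ = max |1 - γ * m| |1 - γ * L'|)
    (tk : ℕ → ℝ) (htk : ∀ k : ℕ, tk k = k * h)
    (y ypred : ℕ → E n)
    (H : ℕ → (E n) →L[ℝ] (E n))
    (hHsa : ∀ k, IsSelfAdjoint (H k))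
    (hHpsd : ∀ k (v : E n), 0 ≤ ⟪H k v, v⟫_ℝ)
    (hHerr : ∀ k, ‖ContinuousLinearMap.id ℝ (E n) - (Hess (tk k) (y k)).comp (H k)‖ ≤ ε)
    (hpred : ∀ k, ypred k = y k - h • H k (Gt (tk k) (y k)))
    (hcorr : ∀ k, y (k + 1) = ypred k - γ • Fgrad (tk (k + 1)) (ypred k)) :
    (∀ k : ℕ, ‖y k - ystar (tk k)‖
        ≤ ρ ^ k * ‖y 0 - ystar (tk 0)‖
          + ρ * (2 * h * C0 / m + h * C0 * ε / m + h ^ 2 * Δ) * (1 - ρ ^ k) / (1 - ρ))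
    ∧ Filter.limsup (fun k => ‖y k - ystar (tk k)‖) Filter.atTop
        ≤ ρ / (1 - ρ) * (2 * h * C0 / m + h * C0 * ε / m + h ^ 2 * Δ) :=
  stmt_0_general F Fgrad Hess Gt m L' C0 C1 C2 C3 hm hmL hC0 hC1 hC2 hC3 hgrad hhess ht hstrong
    hsmooth hC0b ystar hmin h γ ε Δ ρ hh hε hγ hγ2 hΔ hρ tk htk y ypred H hHerr hpred hcorr
end

section
/- Let A and D̂ be symmetric real N×N matrices with A ⪰ m·I for some m > 0 and D̂ positive definite with D̂ ⪯ (L/2)·I for some L > 0, and set D := A + D̂. Let B be a symmetric real N×N matrix with ‖D̂^{-1/2} B D̂^{-1/2}‖ ≤ 1. Then ‖D^{-1/2} B D^{-1/2}‖ ≤ (L/2)/(m + L/2) < 1. -/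
/-!
Put `s = √D̂` and `t = √D`. Writing `t⁻¹ B t⁻¹ = (t⁻¹ s)(s⁻¹ B s⁻¹)(s t⁻¹)` and using the
C⋆-identity `‖s t⁻¹‖² = ‖t⁻¹ D̂ t⁻¹‖` reduces the claim to `‖t⁻¹ D̂ t⁻¹‖ ≤ ϱ`, i.e. to the Loewner
inequality `D̂ ≤ ϱ D`. That one holds because `ϱ D - D̂ = ϱ (A - m) + (1 - ϱ)(L/2 - D̂)`, the
coefficients being chosen so that `ϱ m = (1 - ϱ) L/2`.
-/

open CFC

section CStarRing

variable {A : Type*} [NormedRing A] [StarRing A] [CStarRing A]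

theorem norm_mul_mul_self_le_of_mul_eq_one {s u x : A} (hsu : s * u = 1) (hus : u * s = 1)
    (hs : IsSelfAdjoint s) (hx : IsSelfAdjoint x) (b : A) :
    ‖x * b * x‖ ≤ ‖u * b * u‖ * ‖x * (s * s) * x‖ := by
  have hfactor : x * b * x = (x * s) * (u * b * u) * (s * x) := by
    simp only [mul_assoc, ← mul_assoc s u, hsu, one_mul, ← mul_assoc u s, hus]
  have hstar : star (s * x) = x * s := by rw [star_mul, hs.star_eq, hx.star_eq]
  have hsq : ‖s * x‖ * ‖s * x‖ = ‖x * (s * s) * x‖ := by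
    rw [← CStarRing.norm_star_mul_self, hstar]
    simp only [mul_assoc]
  calc ‖x * b * x‖ ≤ ‖x * s‖ * ‖u * b * u‖ * ‖s * x‖ := by
        rw [hfactor]; exact norm_mul₃_le
    _ = ‖u * b * u‖ * (‖s * x‖ * ‖s * x‖) := by
        rw [← hstar, norm_star]; ring
    _ = ‖u * b * u‖ * ‖x * (s * s) * x‖ := by rw [hsq]

end CStarRing

theorem le_smul_add_of_smul_le {M : Type*} [AddCommGroup M] [PartialOrder M]
    [IsOrderedAddMonoid M] [Module ℝ M] [PosSMulMono ℝ M] {a d e : M} {m c : ℝ}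
    (hm : 0 < m) (hc : 0 ≤ c) (ha : m • e ≤ a) (hd : d ≤ c • e) :
    d ≤ (c / (m + c)) • (a + d) := by
  set ρ := c / (m + c)
  have hρ : ρ * m = (1 - ρ) * c := by simp only [ρ]; field_simp; ring
  have hρ1 : ρ ≤ 1 := by rw [div_le_one (by linarith)]; linarith
  have hsplit : ρ • (a + d) - d = ρ • (a - m • e) + (1 - ρ) • (c • e - d) := by
    rw [smul_sub, smul_sub, smul_smul, smul_smul, hρ]
    module
  rw [← sub_nonneg, hsplit]
  exact add_nonneg (smul_nonneg (by positivity) (sub_nonneg.mpr ha))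
    (smul_nonneg (sub_nonneg.mpr hρ1) (sub_nonneg.mpr hd))

theorem ContinuousLinearMap.norm_le_of_abs_re_inner_le {𝕜 E : Type*} [RCLike 𝕜]
    [NormedAddCommGroup E] [InnerProductSpace 𝕜 E] {T : E →L[𝕜] E}
    (hT : (T : E →ₗ[𝕜] E).IsSymmetric) {r : ℝ} (hr : 0 ≤ r)
    (h : ∀ x, |RCLike.re (inner 𝕜 (T x) x)| ≤ r * ‖x‖ ^ 2) : ‖T‖ ≤ r := by
  rw [T.norm_eq_iSup_rayleighQuotient hT]
  refine ciSup_le fun x => ?_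
  rw [abs_div, _root_.abs_sq, reApplyInnerSelf_apply]
  exact div_le_of_le_mul₀ (by positivity) hr (h x)

namespace Matrix

open scoped Norms.L2Operator MatrixOrder RealInnerProductSpace

variable {n : Type*} [Fintype n] [DecidableEq n]

theorem PosSemidef.inner_toEuclideanCLM_self_nonneg {P : Matrix n n ℝ} (hP : P.PosSemidef)
    (x : EuclideanSpace ℝ n) : 0 ≤ ⟪x, toEuclideanCLM (𝕜 := ℝ) P x⟫ := by
  rw [inner_toEuclideanCLM]
  simpa using hP.dotProduct_mulVec_nonneg x

theorem l2_opNorm_le_of_nonneg_of_le_smul_one {M : Matrix n n ℝ} {r : ℝ} (hr : 0 ≤ r)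
    (h0 : 0 ≤ M) (hM : M ≤ r • 1) : ‖M‖ ≤ r := by
  have hM0 := nonneg_iff_posSemidef.mp h0
  have hT : IsSelfAdjoint (toEuclideanCLM (n := n) (𝕜 := ℝ) M) :=
    hM0.isHermitian.isSelfAdjoint.map _
  rw [cstar_norm_def]
  refine ContinuousLinearMap.norm_le_of_abs_re_inner_le hT.isSymmetric hr fun x => ?_
  have hlow := hM0.inner_toEuclideanCLM_self_nonneg x
  have hup := (le_iff.mp hM).inner_toEuclideanCLM_self_nonneg x
  rw [map_sub, map_smul, map_one, _root_.sub_apply, _root_.smul_apply, one_apply_eq_self,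
    inner_sub_right, real_inner_smul_right, real_inner_self_eq_norm_sq] at hup
  rw [RCLike.re_to_real, real_inner_comm, abs_of_nonneg hlow]
  linarith

theorem l2_opNorm_inv_mul_mul_inv_le {T D : Matrix n n ℝ} {r : ℝ} (hT : IsSelfAdjoint T)
    (hTu : IsUnit T) (hr : 0 ≤ r) (hD : 0 ≤ D) (hDT : D ≤ r • (T * T)) :
    ‖T⁻¹ * D * T⁻¹‖ ≤ r := by
  have hTinv : IsSelfAdjoint T⁻¹ := IsHermitian.inv hT
  have hdet := (isUnit_iff_isUnit_det T).mp hTu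
  have hconj : T⁻¹ * (r • (T * T)) * T⁻¹ = r • 1 := by
    rw [mul_smul_comm, smul_mul_assoc, ← mul_assoc, nonsing_inv_mul _ hdet, one_mul,
      mul_nonsing_inv _ hdet]
  refine l2_opNorm_le_of_nonneg_of_le_smul_one hr (hTinv.conjugate_nonneg hD) ?_
  rw [← hconj]
  exact hTinv.conjugate_le_conjugate hDT

theorem l2_opNorm_inv_sqrt_mul_mul_inv_sqrt_le {A D B : Matrix n n ℝ} {m c : ℝ} (hm : 0 < m)
    (hc : 0 ≤ c) (hA : m • 1 ≤ A) (hD : D.PosDef) (hDc : D ≤ c • 1)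
    (hB : ‖(sqrt D)⁻¹ * B * (sqrt D)⁻¹‖ ≤ 1) :
    ‖(sqrt (A + D))⁻¹ * B * (sqrt (A + D))⁻¹‖ ≤ c / (m + c) := by
  have hA0 : 0 ≤ A := (PosSemidef.one.smul hm.le).nonneg.trans hA
  have hAD : (A + D).PosDef := PosDef.posSemidef_add (nonneg_iff_posSemidef.mp hA0) hD
  have hs : IsUnit (sqrt D) := isUnit_sqrt_iff_isStrictlyPositive.mpr hD.isStrictlyPositive
  have ht : IsUnit (sqrt (A + D)) := isUnit_sqrt_iff_isStrictlyPositive.mpr hAD.isStrictlyPositive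
  have hsdet := (isUnit_iff_isUnit_det _).mp hs
  have hDt : ‖(sqrt (A + D))⁻¹ * D * (sqrt (A + D))⁻¹‖ ≤ c / (m + c) := by
    refine l2_opNorm_inv_mul_mul_inv_le (sqrt_nonneg _).isSelfAdjoint ht (by positivity)
      hD.posSemidef.nonneg ?_
    rw [sqrt_mul_sqrt_self _ hAD.posSemidef.nonneg]
    exact le_smul_add_of_smul_le hm hc hA hDc
  calc ‖(sqrt (A + D))⁻¹ * B * (sqrt (A + D))⁻¹‖
      ≤ ‖(sqrt D)⁻¹ * B * (sqrt D)⁻¹‖ * ‖(sqrt (A + D))⁻¹ * D * (sqrt (A + D))⁻¹‖ := by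
        simpa only [sqrt_mul_sqrt_self D hD.posSemidef.nonneg] using
          norm_mul_mul_self_le_of_mul_eq_one (mul_nonsing_inv _ hsdet) (nonsing_inv_mul _ hsdet)
            (sqrt_nonneg D).isSelfAdjoint (IsHermitian.inv (sqrt_nonneg (A + D)).isSelfAdjoint) B
    _ ≤ 1 * (c / (m + c)) := mul_le_mul hB hDt (norm_nonneg _) zero_le_one
    _ = c / (m + c) := one_mul _

end Matrix

open scoped Matrix.Norms.L2Operator MatrixOrder

theorem stmt_4_general {N : ℕ}
    (A Dh B : Matrix (Fin N) (Fin N) ℝ)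
    (m L : ℝ) (hm : 0 < m) (hL : 0 < L)
    (hAm : (A - m • (1 : Matrix (Fin N) (Fin N) ℝ)).PosSemidef)
    (hDh : Dh.PosDef)
    (hDhL : ((L / 2) • (1 : Matrix (Fin N) (Fin N) ℝ) - Dh).PosSemidef)
    (hBn : ‖(CFC.sqrt Dh)⁻¹ * B * (CFC.sqrt Dh)⁻¹‖ ≤ 1) :
    ‖(CFC.sqrt (A + Dh))⁻¹ * B * (CFC.sqrt (A + Dh))⁻¹‖ ≤ (L / 2) / (m + L / 2)
      ∧ (L / 2) / (m + L / 2) < 1 :=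
  ⟨Matrix.l2_opNorm_inv_sqrt_mul_mul_inv_sqrt_le hm (by positivity) hAm hDh hDhL hBn,
    by rw [div_lt_one (by positivity)]; linarith⟩

/-- the contraction factor ϱ = (L/2)/(m + L/2) of Proposition 3.
Here `Dh` plays the role of D̂ = diag[∇²g], A that of ∇²f, and D = A + D̂. -/
theorem stmt_4 {N : ℕ} (hN : 1 ≤ N)
    (A Dh B : Matrix (Fin N) (Fin N) ℝ)
    (m L : ℝ) (hm : 0 < m) (hL : 0 < L)
    (hA : A.IsHermitian)
    (hAm : (A - m • (1 : Matrix (Fin N) (Fin N) ℝ)).PosSemidef)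
    (hDh : Dh.PosDef)
    (hDhL : ((L / 2) • (1 : Matrix (Fin N) (Fin N) ℝ) - Dh).PosSemidef)
    (hB : B.IsHermitian)
    (hBn : ‖(CFC.sqrt Dh)⁻¹ * B * (CFC.sqrt Dh)⁻¹‖ ≤ 1)
    (hD : (A + Dh).PosDef) :
    ‖(CFC.sqrt (A + Dh))⁻¹ * B * (CFC.sqrt (A + Dh))⁻¹‖ ≤ (L / 2) / (m + L / 2)
      ∧ (L / 2) / (m + L / 2) < 1 :=
  stmt_4_general A Dh B m L hm hL hAm hDh hDhL hBn
end

section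
/- Let D and B be symmetric real N×N matrices with D positive definite, D ⪰ d·I for some d > 0, and set X := D^{-1/2} B D^{-1/2}. Suppose ‖X‖ ≤ ϱ for some ϱ ∈ [0,1), and for K ∈ ℕ define H_K^{-1} := D^{-1/2} (∑_{τ=0}^{K} X^τ) D^{-1/2}. Then the identity I − (D − B) · H_K^{-1} = D^{1/2} X^{K+1} D^{-1/2} holds, and consequently ‖H_K^{-1} − (D − B)^{-1}‖ ≤ ϱ^{K+1} / (d(1 − ϱ)). -/
/-!
With `S = D^{1/2}` and `X = S⁻¹ B S⁻¹` one has `D - B = S (1 - X) S`, so the identity is the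
telescoping sum `(1 - X) ∑_{τ ≤ K} X^τ = 1 - X^{K+1}` conjugated by `S`. Since `‖X‖ < 1`, the
Neumann series `Y = ∑' X^τ` inverts `1 - X` with `‖Y‖ ≤ (1 - ϱ)⁻¹`, whence
`H_K^{-1} - (D - B)⁻¹ = -S⁻¹ (Y X^{K+1}) S⁻¹`. Finally `‖S⁻¹‖² = ‖D⁻¹‖ ≤ d⁻¹`, because
`d ‖z‖² ≤ ⟪z, D z⟫ ≤ ‖z‖ ‖D z‖`.
-/

open scoped Matrix.Norms.L2Operator MatrixOrder
open Matrix Finset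

section Ring
variable {R : Type*} [Ring R]

theorem mul_self_sub_eq_mul_one_sub_mul {s t : R} (hst : s * t = 1) (hts : t * s = 1) (b : R) :
    s * s - b = s * (1 - t * b * t) * s := by
  simp only [mul_sub, sub_mul, mul_one, ← mul_assoc, hst, one_mul]
  rw [mul_assoc _ t s, hts, mul_one]

theorem one_sub_mul_conj_geom_sum {s t : R} (hst : s * t = 1) (x : R) (n : ℕ) :
    1 - s * (1 - x) * s * (t * (∑ i ∈ range n, x ^ i) * t) = s * x ^ n * t := by
  have : s * (1 - x) * s * (t * (∑ i ∈ range n, x ^ i) * t) = s * (1 - x ^ n) * t := by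
    simp only [mul_assoc]
    rw [← mul_assoc s t, hst, one_mul, ← mul_assoc (1 - x), mul_neg_geom_sum]
  rw [this, mul_sub, sub_mul, mul_one, hst, sub_sub_cancel]

theorem conj_geom_sum_sub_conj_eq {x y : R} (hy : y * (1 - x) = 1) (t : R) (n : ℕ) :
    t * (∑ i ∈ range n, x ^ i) * t - t * y * t = -(t * (y * x ^ n) * t) := by
  have : ∑ i ∈ range n, x ^ i = y - y * x ^ n := by
    rw [← mul_one_sub, ← mul_neg_geom_sum, ← mul_assoc, hy, one_mul]
  rw [this]
  noncomm_ring

end Ring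

theorem norm_tsum_geometric_le_of_norm_one_le {R : Type*} [NormedRing R] (h1 : ‖(1 : R)‖ ≤ 1)
    {x : R} (hx : ‖x‖ < 1) : ‖∑' n, x ^ n‖ ≤ (1 - ‖x‖)⁻¹ := by
  linarith [tsum_geometric_le_of_norm_lt_one x hx]

theorem norm_mul_mul_self_le {R : Type*} [NonUnitalSeminormedRing R] (t a : R) :
    ‖t * a * t‖ ≤ ‖t‖ ^ 2 * ‖a‖ :=
  norm_mul₃_le.trans_eq (by ring)

namespace Matrix
variable {n : Type*} [Fintype n] [DecidableEq n]

theorem PosDef.isUnit_sqrt {D : Matrix n n ℝ} (hD : D.PosDef) : IsUnit (CFC.sqrt D) :=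
  (CFC.isUnit_sqrt_iff D hD.posSemidef.nonneg).mpr hD.isUnit

theorem l2_opNorm_one_le : ‖(1 : Matrix n n ℝ)‖ ≤ 1 := by
  rw [← l2_opNorm_toEuclideanCLM, map_one]
  exact ContinuousLinearMap.norm_id_le

theorem l2_opNorm_le_of_mul_eq_one {A B : Matrix n n ℝ} (hAB : A * B = 1) {c : ℝ} (hc : 0 < c)
    (hA : ∀ x, c * ‖x‖ ≤ ‖toEuclideanCLM (𝕜 := ℝ) A x‖) : ‖B‖ ≤ c⁻¹ := by
  rw [← l2_opNorm_toEuclideanCLM]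
  refine ContinuousLinearMap.opNorm_le_bound _ (inv_nonneg.mpr hc.le) fun y => ?_
  have hy : toEuclideanCLM (𝕜 := ℝ) A (toEuclideanCLM (𝕜 := ℝ) B y) = y := by
    simpa using congr(toEuclideanCLM (𝕜 := ℝ) $hAB y)
  rw [inv_mul_eq_div, le_div_iff₀' hc]
  simpa [hy] using hA (toEuclideanCLM (𝕜 := ℝ) B y)

theorem PosSemidef.mul_norm_le_norm_toEuclideanCLM {D : Matrix n n ℝ} {d : ℝ}
    (h : (D - d • 1).PosSemidef) (x : EuclideanSpace ℝ n) :
    d * ‖x‖ ≤ ‖toEuclideanCLM (𝕜 := ℝ) D x‖ := by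
  have hquad : d * ‖x‖ ^ 2 ≤ inner ℝ x (toEuclideanCLM (𝕜 := ℝ) D x) := by
    have := h.dotProduct_mulVec_nonneg x.ofLp
    rw [inner_toEuclideanCLM, ← real_inner_self_eq_norm_sq, EuclideanSpace.inner_eq_star_dotProduct]
    simpa [sub_mulVec, smul_mulVec, dotProduct_comm] using this
  rcases (norm_nonneg x).eq_or_lt with hx | hx
  · rw [← hx, mul_zero]; exact norm_nonneg _
  · refine le_of_mul_le_mul_right ?_ hx
    calc d * ‖x‖ * ‖x‖ = d * ‖x‖ ^ 2 := by ring
      _ ≤ _ := hquad.trans (real_inner_le_norm _ _)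
      _ = _ := mul_comm _ _

theorem PosDef.l2_opNorm_inv_le {D : Matrix n n ℝ} (hD : D.PosDef) {d : ℝ} (hd : 0 < d)
    (h : (D - d • 1).PosSemidef) : ‖D⁻¹‖ ≤ d⁻¹ :=
  l2_opNorm_le_of_mul_eq_one (mul_nonsing_inv D ((isUnit_iff_isUnit_det D).mp hD.isUnit)) hd
    h.mul_norm_le_norm_toEuclideanCLM

theorem PosDef.l2_opNorm_inv_sqrt_sq_le {D : Matrix n n ℝ} (hD : D.PosDef) {d : ℝ} (hd : 0 < d)
    (h : (D - d • 1).PosSemidef) : ‖(CFC.sqrt D)⁻¹‖ ^ 2 ≤ d⁻¹ := by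
  have hself : IsSelfAdjoint (CFC.sqrt D)⁻¹ := (CFC.sqrt_nonneg D).posSemidef.isHermitian.inv
  rw [← hself.norm_mul_self, ← mul_inv_rev, CFC.sqrt_mul_sqrt_self D hD.posSemidef.nonneg]
  exact hD.l2_opNorm_inv_le hd h

end Matrix

theorem stmt_7_general {N : ℕ}
    (D B : Matrix (Fin N) (Fin N) ℝ)
    (hD : D.PosDef)
    (d ϱ : ℝ) (hd : 0 < d)
    (hDd : (D - d • (1 : Matrix (Fin N) (Fin N) ℝ)).PosSemidef)
    (hϱ1 : ϱ < 1)
    (hX : ‖(CFC.sqrt D)⁻¹ * B * (CFC.sqrt D)⁻¹‖ ≤ ϱ) :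
    ∀ K : ℕ,
      (1 : Matrix (Fin N) (Fin N) ℝ) -
          (D - B) *
            ((CFC.sqrt D)⁻¹ *
              (∑ τ ∈ Finset.range (K + 1),
                ((CFC.sqrt D)⁻¹ * B * (CFC.sqrt D)⁻¹) ^ τ) *
              (CFC.sqrt D)⁻¹) =
        (CFC.sqrt D) *
          ((CFC.sqrt D)⁻¹ * B * (CFC.sqrt D)⁻¹) ^ (K + 1) *
          (CFC.sqrt D)⁻¹
      ∧ ‖((CFC.sqrt D)⁻¹ *
            (∑ τ ∈ Finset.range (K + 1),
              ((CFC.sqrt D)⁻¹ * B * (CFC.sqrt D)⁻¹) ^ τ) *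
            (CFC.sqrt D)⁻¹) - (D - B)⁻¹‖
          ≤ ϱ ^ (K + 1) / (d * (1 - ϱ)) := by
  intro K
  set S := CFC.sqrt D
  set X := S⁻¹ * B * S⁻¹
  have hSdet : IsUnit S.det := (isUnit_iff_isUnit_det S).mp hD.isUnit_sqrt
  have hSS : S * S⁻¹ = 1 := mul_nonsing_inv S hSdet
  have hDB : D - B = S * (1 - X) * S := by
    rw [← CFC.sqrt_mul_sqrt_self D hD.posSemidef.nonneg]
    exact mul_self_sub_eq_mul_one_sub_mul hSS (nonsing_inv_mul S hSdet) B
  refine ⟨by rw [hDB]; exact one_sub_mul_conj_geom_sum hSS X (K + 1), ?_⟩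
  have hXlt : ‖X‖ < 1 := hX.trans_lt hϱ1
  set Y := ∑' n, X ^ n
  have hY : Y * (1 - X) = 1 := geom_series_mul_neg X hXlt
  have hinv : (D - B)⁻¹ = S⁻¹ * Y * S⁻¹ := by
    refine inv_eq_left_inv ?_
    rw [hDB]
    simp only [mul_assoc]
    rw [nonsing_inv_mul_cancel_left S _ hSdet, ← mul_assoc Y, hY, one_mul, nonsing_inv_mul S hSdet]
  have hYnorm : ‖Y‖ ≤ (1 - ϱ)⁻¹ :=
    (norm_tsum_geometric_le_of_norm_one_le l2_opNorm_one_le hXlt).trans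
      (inv_anti₀ (by linarith) (by linarith))
  rw [hinv, conj_geom_sum_sub_conj_eq hY, norm_neg]
  calc ‖S⁻¹ * (Y * X ^ (K + 1)) * S⁻¹‖
      ≤ ‖S⁻¹‖ ^ 2 * (‖Y‖ * ‖X‖ ^ (K + 1)) := by
        grw [norm_mul_mul_self_le, norm_mul_le, norm_pow_le' X K.succ_pos]
    _ ≤ d⁻¹ * ((1 - ϱ)⁻¹ * ϱ ^ (K + 1)) := by
        gcongr
        exact hD.l2_opNorm_inv_sqrt_sq_le hd hDd
    _ = ϱ ^ (K + 1) / (d * (1 - ϱ)) := by field_simp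

/-- the error of the K-th order Hessian-inverse approximation
(quantifying e_k of Proposition 3): the identity
I − (D − B)·H_K^{-1} = D^{1/2} X^{K+1} D^{-1/2} and the resulting bound
‖H_K^{-1} − (D − B)^{-1}‖ ≤ ϱ^{K+1}/(d(1 − ϱ)). -/
theorem stmt_7 {N : ℕ} (hN : 1 ≤ N)
    (D B : Matrix (Fin N) (Fin N) ℝ)
    (hD : D.PosDef) (hB : B.IsHermitian)
    (d ϱ : ℝ) (hd : 0 < d)
    (hDd : (D - d • (1 : Matrix (Fin N) (Fin N) ℝ)).PosSemidef)
    (hϱ0 : 0 ≤ ϱ) (hϱ1 : ϱ < 1)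
    (hX : ‖(CFC.sqrt D)⁻¹ * B * (CFC.sqrt D)⁻¹‖ ≤ ϱ) :
    ∀ K : ℕ,
      (1 : Matrix (Fin N) (Fin N) ℝ) -
          (D - B) *
            ((CFC.sqrt D)⁻¹ *
              (∑ τ ∈ Finset.range (K + 1),
                ((CFC.sqrt D)⁻¹ * B * (CFC.sqrt D)⁻¹) ^ τ) *
              (CFC.sqrt D)⁻¹) =
        (CFC.sqrt D) *
          ((CFC.sqrt D)⁻¹ * B * (CFC.sqrt D)⁻¹) ^ (K + 1) *
          (CFC.sqrt D)⁻¹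
      ∧ ‖((CFC.sqrt D)⁻¹ *
            (∑ τ ∈ Finset.range (K + 1),
              ((CFC.sqrt D)⁻¹ * B * (CFC.sqrt D)⁻¹) ^ τ) *
            (CFC.sqrt D)⁻¹) - (D - B)⁻¹‖
          ≤ ϱ ^ (K + 1) / (d * (1 - ϱ)) :=
  stmt_7_general D B hD d ϱ hd hDd hϱ1 hX
end

section
/- The solution trajectory is Lipschitz in time: for all t, t' ∈ ℝ, ‖y*(t') − y*(t)‖ ≤ (C0/m)·|t' − t|. -/
open scoped InnerProductSpace

theorem mul_norm_sub_le_norm_of_strongly_monotone {E : Type*} [NormedAddCommGroup E]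
    [InnerProductSpace ℝ E] {g : E → E} {m : ℝ}
    (hg : ∀ u v, m * ‖u - v‖ ^ 2 ≤ ⟪g u - g v, u - v⟫_ℝ) {x : E} (hx : g x = 0) (y : E) :
    m * ‖x - y‖ ≤ ‖g y‖ := by
  have key : (m * ‖x - y‖) * ‖x - y‖ ≤ ‖g y‖ * ‖x - y‖ :=
    calc (m * ‖x - y‖) * ‖x - y‖ = m * ‖x - y‖ ^ 2 := by ring
      _ ≤ ⟪g x - g y, x - y⟫_ℝ := hg x y
      _ = ⟪-g y, x - y⟫_ℝ := by rw [hx, zero_sub]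
      _ ≤ ‖-g y‖ * ‖x - y‖ := real_inner_le_norm _ _
      _ = ‖g y‖ * ‖x - y‖ := by rw [norm_neg]
  rcases (norm_nonneg (x - y)).eq_or_lt with h0 | hpos
  · rw [← h0, mul_zero]
    exact norm_nonneg _
  · exact le_of_mul_le_mul_right key hpos

theorem stmt_10_general {n : ℕ}
    (Fgrad : ℝ → EuclideanSpace ℝ (Fin n) → EuclideanSpace ℝ (Fin n))
    (m C0 : ℝ) (hm : 0 < m)
    (hstrong : ∀ t (y y' : EuclideanSpace ℝ (Fin n)),
      m * ‖y - y'‖ ^ 2 ≤ ⟪Fgrad t y - Fgrad t y', y - y'⟫_ℝ)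
    (htlip : ∀ t t' y, ‖Fgrad t y - Fgrad t' y‖ ≤ C0 * |t - t'|)
    (ystar : ℝ → EuclideanSpace ℝ (Fin n))
    (hcrit : ∀ t, Fgrad t (ystar t) = 0) :
    ∀ t t', ‖ystar t' - ystar t‖ ≤ (C0 / m) * |t' - t| := by
  intro t t'
  have hbound : m * ‖ystar t' - ystar t‖ ≤ C0 * |t' - t| :=
    calc m * ‖ystar t' - ystar t‖ ≤ ‖Fgrad t' (ystar t)‖ :=
          mul_norm_sub_le_norm_of_strongly_monotone (hstrong t') (hcrit t') _
      _ = ‖Fgrad t' (ystar t) - Fgrad t (ystar t)‖ := by rw [hcrit t, sub_zero]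
      _ ≤ C0 * |t' - t| := htlip t' t _
  rw [div_mul_eq_mul_div, le_div_iff₀ hm, mul_comm]
  exact hbound

/-- the solution trajectory is Lipschitz in time with constant C0/m. -/
theorem stmt_10 {n : ℕ} (hn : 1 ≤ n)
    (F : ℝ → EuclideanSpace ℝ (Fin n) → ℝ)
    (Fgrad : ℝ → EuclideanSpace ℝ (Fin n) → EuclideanSpace ℝ (Fin n))
    (m C0 : ℝ) (hm : 0 < m) (hC0 : 0 ≤ C0)
    (hgrad : ∀ t y, HasGradientAt (F t) (Fgrad t y) y)
    (hstrong : ∀ t (y y' : EuclideanSpace ℝ (Fin n)),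
      m * ‖y - y'‖ ^ 2 ≤ ⟪Fgrad t y - Fgrad t y', y - y'⟫_ℝ)
    (htlip : ∀ t t' y, ‖Fgrad t y - Fgrad t' y‖ ≤ C0 * |t - t'|)
    (ystar : ℝ → EuclideanSpace ℝ (Fin n))
    (hmin : ∀ t, IsMinOn (F t) Set.univ (ystar t))
    (hcrit : ∀ t, Fgrad t (ystar t) = 0) :
    ∀ t t', ‖ystar t' - ystar t‖ ≤ (C0 / m) * |t' - t| :=
  stmt_10_general Fgrad m C0 hm hstrong htlip ystar hcrit
end

section
/- Let E = EuclideanSpace ℝ (Fin n), and let f : E → ℝ be differentiable, m-strongly convex with L-Lipschitz gradient (0 < m ≤ L), and let x* be its minimizer (∇f(x*) = 0). Then for every γ > 0 and every x ∈ E, the gradient descent step satisfies ‖x − γ∇f(x) − x*‖ ≤ max(|1 − γm|, |1 − γL|)·‖x − x*‖. -/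
/-!
Subtracting `m / 2 * ‖·‖²` from `f` leaves a convex function whose gradient `f' - m • id` is
`(L - m)`-smooth, and the Baillon–Haddad co-coercivity of such gradients turns into the
interpolation inequality `‖g‖² + m L ‖d‖² ≤ (L + m) ⟪g, d⟫` for `g = f' x - f' y`, `d = x - y`.
At `y = x*` we have `g = f' x`; expanding `‖d - γ g‖²` and using the interpolation inequality
together with its consequence `m ‖d‖ ≤ ‖g‖ ≤ L ‖d‖` bounds it by `(1 - γ m)² ‖d‖²` when
`γ (L + m) ≤ 2` and by `(1 - γ L)² ‖d‖²` otherwise.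
-/

open scoped InnerProductSpace

section

variable {E : Type*} [NormedAddCommGroup E] [InnerProductSpace ℝ E]

section Gradient

variable [CompleteSpace E] {f : E → ℝ} {f' : E → E}

theorem HasGradientAt.neg {g x : E} (h : HasGradientAt f g x) :
    HasGradientAt (fun z => -f z) (-g) x := by
  rw [hasGradientAt_iff_hasFDerivAt, map_neg]
  exact (hasGradientAt_iff_hasFDerivAt.mp h).neg

theorem HasGradientAt.sub_mul_norm_sq {g x : E} (h : HasGradientAt f g x) (c : ℝ) :
    HasGradientAt (fun z => f z - c / 2 * ‖z‖ ^ 2) (g - c • x) x := by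
  rw [hasGradientAt_iff_hasFDerivAt] at h ⊢
  refine (h.sub ((hasStrictFDerivAt_norm_sq x).hasFDerivAt.const_mul (c / 2))).congr_fderiv ?_
  ext v
  simp only [sub_apply, InnerProductSpace.toDual_apply_apply,
    smul_apply, innerSL_apply_apply, inner_sub_left, real_inner_smul_left]
  ring

theorem HasGradientAt.hasDerivAt_comp_add_smul {g x d : E} {t : ℝ}
    (h : HasGradientAt f g (x + t • d)) :
    HasDerivAt (fun s : ℝ => f (x + s • d)) ⟪g, d⟫_ℝ t := by
  have hline : HasDerivAt (fun s : ℝ => x + s • d) d t := by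
    simpa using ((hasDerivAt_id t).smul_const d).const_add x
  simpa [Function.comp_def] using (hasGradientAt_iff_hasFDerivAt.mp h).comp_hasDerivAt t hline

theorem add_inner_add_mul_norm_sq_le {a : ℝ} (hgrad : ∀ z, HasGradientAt f (f' z) z)
    (hmono : ∀ u v, a * ‖u - v‖ ^ 2 ≤ ⟪f' u - f' v, u - v⟫_ℝ) (x y : E) :
    f x + ⟪f' x, y - x⟫_ℝ + a / 2 * ‖y - x‖ ^ 2 ≤ f y := by
  set d := y - x
  let φ : ℝ → ℝ := fun t => f (x + t • d) - t * ⟪f' x, d⟫_ℝ - a / 2 * t ^ 2 * ‖d‖ ^ 2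
  have hφ : ∀ t, HasDerivAt φ (⟪f' (x + t • d), d⟫_ℝ - ⟪f' x, d⟫_ℝ - a * t * ‖d‖ ^ 2) t := by
    intro t
    have hline := (hgrad (x + t • d)).hasDerivAt_comp_add_smul
    have hlin := (hasDerivAt_id t).mul_const ⟪f' x, d⟫_ℝ
    have hquad := ((hasDerivAt_pow 2 t).const_mul (a / 2)).mul_const (‖d‖ ^ 2)
    exact ((hline.sub hlin).sub hquad).congr_deriv (by push_cast; ring)
  have hφ'_nonneg : ∀ t ∈ interior (Set.Icc (0 : ℝ) 1),
      0 ≤ ⟪f' (x + t • d), d⟫_ℝ - ⟪f' x, d⟫_ℝ - a * t * ‖d‖ ^ 2 := by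
    intro t ht
    have ht0 : 0 < t := by rw [interior_Icc] at ht; exact ht.1
    have h := hmono (x + t • d) x
    rw [add_sub_cancel_left, inner_smul_right, norm_smul, Real.norm_of_nonneg ht0.le,
      inner_sub_left] at h
    nlinarith
  have hmonoOn := monotoneOn_of_hasDerivWithinAt_nonneg (convex_Icc 0 1)
    (fun t _ => (hφ t).continuousAt.continuousWithinAt) (fun t _ => (hφ t).hasDerivWithinAt)
    hφ'_nonneg
  have h01 := hmonoOn (by simp) (by simp) zero_le_one
  simp only [φ, d, zero_smul, add_zero, one_smul, add_sub_cancel] at h01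
  linarith

theorem le_add_inner_add_mul_norm_sq {b : ℝ} (hgrad : ∀ z, HasGradientAt f (f' z) z)
    (hmono : ∀ u v, ⟪f' u - f' v, u - v⟫_ℝ ≤ b * ‖u - v‖ ^ 2) (x y : E) :
    f y ≤ f x + ⟪f' x, y - x⟫_ℝ + b / 2 * ‖y - x‖ ^ 2 := by
  have hneg := add_inner_add_mul_norm_sq_le (a := -b) (fun z => (hgrad z).neg)
    (fun u v => by rw [← neg_sub', inner_neg_left]; linarith [hmono u v]) x y
  rw [inner_neg_left] at hneg
  linarith

theorem add_inner_add_norm_sub_sq_div_le {K : ℝ} (hK : 0 < K)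
    (hgrad : ∀ z, HasGradientAt f (f' z) z) (hmono : ∀ u v, 0 ≤ ⟪f' u - f' v, u - v⟫_ℝ)
    (hsmooth : ∀ u v, ⟪f' u - f' v, u - v⟫_ℝ ≤ K * ‖u - v‖ ^ 2) (u v : E) :
    f u + ⟪f' u, v - u⟫_ℝ + ‖f' v - f' u‖ ^ 2 / (2 * K) ≤ f v := by
  set g := f' v - f' u
  -- a gradient step of length `1 / K` from `v` for `f - ⟪f' u, ·⟫`, which is minimal at `u`
  set z := v - K⁻¹ • g
  have hlo := add_inner_add_mul_norm_sq_le (a := 0) hgrad (by simpa using hmono) u z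
  have hup := le_add_inner_add_mul_norm_sq hgrad hsmooth v z
  have hzu : z - u = (v - u) - K⁻¹ • g := by simp only [z]; abel
  have hzv : z - v = -(K⁻¹ • g) := by simp only [z]; abel
  have hg : ⟪f' v, g⟫_ℝ - ⟪f' u, g⟫_ℝ = ‖g‖ ^ 2 := by
    rw [← inner_sub_left, real_inner_self_eq_norm_sq]
  rw [hzu, inner_sub_right, real_inner_smul_right] at hlo
  rw [hzv, inner_neg_right, real_inner_smul_right, norm_neg, norm_smul, mul_pow,
    Real.norm_of_nonneg (inv_nonneg.mpr hK.le)] at hup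
  have hquad : K / 2 * (K⁻¹ ^ 2 * ‖g‖ ^ 2) = ‖g‖ ^ 2 / (2 * K) := by field_simp
  have hlin : K⁻¹ * ⟪f' v, g⟫_ℝ - K⁻¹ * ⟪f' u, g⟫_ℝ = 2 * (‖g‖ ^ 2 / (2 * K)) := by
    rw [← mul_sub, hg]; field_simp
  rw [zero_div, zero_mul, add_zero] at hlo
  linarith

theorem norm_sub_sq_le_mul_inner_sub {K : ℝ} (hK : 0 < K)
    (hgrad : ∀ z, HasGradientAt f (f' z) z) (hmono : ∀ u v, 0 ≤ ⟪f' u - f' v, u - v⟫_ℝ)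
    (hsmooth : ∀ u v, ⟪f' u - f' v, u - v⟫_ℝ ≤ K * ‖u - v‖ ^ 2) (x y : E) :
    ‖f' x - f' y‖ ^ 2 ≤ K * ⟪f' x - f' y, x - y⟫_ℝ := by
  have hxy := add_inner_add_norm_sub_sq_div_le hK hgrad hmono hsmooth x y
  have hyx := add_inner_add_norm_sub_sq_div_le hK hgrad hmono hsmooth y x
  have hinner : ⟪f' x - f' y, x - y⟫_ℝ = -⟪f' x, y - x⟫_ℝ - ⟪f' y, x - y⟫_ℝ := by
    rw [inner_sub_left, ← neg_sub y x, inner_neg_right]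
  rw [norm_sub_rev] at hxy
  have hhalves : ‖f' x - f' y‖ ^ 2 / (2 * K) + ‖f' x - f' y‖ ^ 2 / (2 * K)
      = ‖f' x - f' y‖ ^ 2 / K := by field_simp; ring
  have hdiv : ‖f' x - f' y‖ ^ 2 / K ≤ ⟪f' x - f' y, x - y⟫_ℝ := by
    rw [hinner]; linarith
  rwa [div_le_iff₀' hK] at hdiv

theorem norm_sub_sq_add_mul_norm_sub_sq_le {m L : ℝ} (hmL : m ≤ L)
    (hgrad : ∀ z, HasGradientAt f (f' z) z)
    (hstrong : ∀ u v, m * ‖u - v‖ ^ 2 ≤ ⟪f' u - f' v, u - v⟫_ℝ)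
    (hsmooth : ∀ u v, ⟪f' u - f' v, u - v⟫_ℝ ≤ L * ‖u - v‖ ^ 2) (x y : E) :
    ‖f' x - f' y‖ ^ 2 + m * L * ‖x - y‖ ^ 2 ≤ (L + m) * ⟪f' x - f' y, x - y⟫_ℝ := by
  set p : E → E := fun z => f' z - m • z
  have hp_sub : ∀ u v, p u - p v = (f' u - f' v) - m • (u - v) := fun u v => by
    simp only [p]; module
  have hp_inner : ∀ u v, ⟪p u - p v, u - v⟫_ℝ = ⟪f' u - f' v, u - v⟫_ℝ - m * ‖u - v‖ ^ 2 := by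
    intro u v
    rw [hp_sub, inner_sub_left, real_inner_smul_left, real_inner_self_eq_norm_sq]
  have hp_grad : ∀ z, HasGradientAt (fun z => f z - m / 2 * ‖z‖ ^ 2) (p z) z :=
    fun z => (hgrad z).sub_mul_norm_sq m
  have hp_mono : ∀ u v, 0 ≤ ⟪p u - p v, u - v⟫_ℝ := fun u v => by
    rw [hp_inner]; linarith [hstrong u v]
  have hp_coco : ‖p x - p y‖ ^ 2 ≤ (L - m) * ⟪p x - p y, x - y⟫_ℝ := by
    rcases hmL.lt_or_eq with hlt | rfl
    · exact norm_sub_sq_le_mul_inner_sub (sub_pos.2 hlt) hp_grad hp_mono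
        (fun u v => by rw [hp_inner]; linarith [hsmooth u v]) x y
    · -- for `L = m` the pairing vanishes, so smoothness holds with any constant
      have hp_zero : ∀ u v, ⟪p u - p v, u - v⟫_ℝ = 0 := fun u v => by
        rw [hp_inner]; linarith [hsmooth u v, hstrong u v]
      simpa [hp_zero] using norm_sub_sq_le_mul_inner_sub one_pos hp_grad hp_mono
        (fun u v => by rw [hp_zero]; positivity) x y
  rw [hp_inner, hp_sub, norm_sub_sq_real, norm_smul, mul_pow, Real.norm_eq_abs, sq_abs,
    real_inner_smul_right] at hp_coco
  linarith

end Gradient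

theorem norm_sub_smul_le_max_abs_mul_norm {m L γ : ℝ} {g d : E} (hm : 0 < m) (hmL : m ≤ L)
    (hγ : 0 ≤ γ)
    (h : ‖g‖ ^ 2 + m * L * ‖d‖ ^ 2 ≤ (L + m) * ⟪g, d⟫_ℝ) :
    ‖d - γ • g‖ ≤ max |1 - γ * m| |1 - γ * L| * ‖d‖ := by
  have hcs := real_inner_le_norm g d
  have hLm : 0 < L + m := by linarith
  have hmLd : m * ‖d‖ ≤ L * ‖d‖ := mul_le_mul_of_nonneg_right hmL (norm_nonneg d)
  have hprod : (‖g‖ - m * ‖d‖) * (‖g‖ - L * ‖d‖) ≤ 0 := by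
    nlinarith [mul_le_mul_of_nonneg_left hcs hLm.le]
  have hlower : m * ‖d‖ ≤ ‖g‖ := by
    by_contra! hlt
    nlinarith [mul_pos (sub_pos.2 hlt) (sub_pos.2 (hlt.trans_le hmLd))]
  have hupper : ‖g‖ ≤ L * ‖d‖ := by
    by_contra! hlt
    nlinarith [mul_pos (sub_pos.2 hlt) (sub_pos.2 (hmLd.trans_lt hlt))]
  have hexp : ‖d - γ • g‖ ^ 2 = ‖d‖ ^ 2 - 2 * γ * ⟪g, d⟫_ℝ + γ ^ 2 * ‖g‖ ^ 2 := by
    rw [norm_sub_sq_real, real_inner_smul_right, norm_smul, mul_pow, Real.norm_eq_abs, sq_abs,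
      real_inner_comm]
    ring
  have hsq : ‖d - γ • g‖ ^ 2 ≤ ((1 - γ * m) * ‖d‖) ^ 2 ∨
      ‖d - γ • g‖ ^ 2 ≤ ((1 - γ * L) * ‖d‖) ^ 2 := by
    rw [hexp]
    -- `(L + m) (c²‖d‖² - ‖d - γ • g‖²)`, for `c = 1 - γm` resp. `1 - γL`, is `2γ` times the slack
    -- in `h` plus `γ |2 - γ(L + m)|` times `‖g‖² - m²‖d‖²` resp. `L²‖d‖² - ‖g‖²`.
    rcases le_total (γ * (L + m)) 2 with hsmall | hlarge
    · left
      nlinarith [mul_nonneg hγ (sub_nonneg.2 hsmall),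
        mul_le_mul hlower hlower (by positivity) (norm_nonneg g)]
    · right
      nlinarith [mul_nonneg hγ (sub_nonneg.2 hlarge),
        mul_le_mul hupper hupper (norm_nonneg g) ((norm_nonneg g).trans hupper)]
  have hle : ∀ c : ℝ, ‖d - γ • g‖ ^ 2 ≤ (c * ‖d‖) ^ 2 → ‖d - γ • g‖ ≤ |c| * ‖d‖ := by
    intro c hc
    rw [← abs_norm d, ← abs_mul, ← abs_norm (d - γ • g)]
    exact sq_le_sq.mp hc
  rcases hsq with hsq | hsq
  · exact (hle _ hsq).trans (mul_le_mul_of_nonneg_right (le_max_left _ _) (norm_nonneg d))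
  · exact (hle _ hsq).trans (mul_le_mul_of_nonneg_right (le_max_right _ _) (norm_nonneg d))

end

theorem stmt_13_general {n : ℕ}
    (f : EuclideanSpace ℝ (Fin n) → ℝ)
    (f' : EuclideanSpace ℝ (Fin n) → EuclideanSpace ℝ (Fin n))
    (m L : ℝ) (hm : 0 < m) (hmL : m ≤ L)
    (hgrad : ∀ x, HasGradientAt f (f' x) x)
    (hstrong : ∀ x y : EuclideanSpace ℝ (Fin n), m * ‖x - y‖ ^ 2 ≤ ⟪f' x - f' y, x - y⟫_ℝ)
    (hlip : ∀ x y : EuclideanSpace ℝ (Fin n), ‖f' x - f' y‖ ≤ L * ‖x - y‖)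
    (xs : EuclideanSpace ℝ (Fin n))
    (hcrit : f' xs = 0) :
    ∀ γ : ℝ, 0 < γ → ∀ x : EuclideanSpace ℝ (Fin n),
      ‖x - γ • f' x - xs‖ ≤ max |1 - γ * m| |1 - γ * L| * ‖x - xs‖ := by
  intro γ hγ x
  have hsmooth : ∀ u v : EuclideanSpace ℝ (Fin n), ⟪f' u - f' v, u - v⟫_ℝ ≤ L * ‖u - v‖ ^ 2 :=
    fun u v => calc
      _ ≤ ‖f' u - f' v‖ * ‖u - v‖ := real_inner_le_norm _ _
      _ ≤ L * ‖u - v‖ * ‖u - v‖ := mul_le_mul_of_nonneg_right (hlip u v) (norm_nonneg _)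
      _ = L * ‖u - v‖ ^ 2 := by ring
  have hinterp := norm_sub_sq_add_mul_norm_sub_sq_le hmL hgrad hstrong hsmooth x xs
  rw [hcrit, sub_zero] at hinterp
  rw [sub_right_comm]
  exact norm_sub_smul_le_max_abs_mul_norm hm hmL hγ.le hinterp

/-- linear contraction of the gradient descent (correction) step
for an m-strongly convex function with L-Lipschitz gradient. -/
theorem stmt_13 {n : ℕ} (hn : 1 ≤ n)
    (f : EuclideanSpace ℝ (Fin n) → ℝ)
    (f' : EuclideanSpace ℝ (Fin n) → EuclideanSpace ℝ (Fin n))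
    (m L : ℝ) (hm : 0 < m) (hmL : m ≤ L)
    (hgrad : ∀ x, HasGradientAt f (f' x) x)
    (hstrong : ∀ x y : EuclideanSpace ℝ (Fin n), m * ‖x - y‖ ^ 2 ≤ ⟪f' x - f' y, x - y⟫_ℝ)
    (hlip : ∀ x y : EuclideanSpace ℝ (Fin n), ‖f' x - f' y‖ ≤ L * ‖x - y‖)
    (xs : EuclideanSpace ℝ (Fin n))
    (hmin : IsMinOn f Set.univ xs) (hcrit : f' xs = 0) :
    ∀ γ : ℝ, 0 < γ → ∀ x : EuclideanSpace ℝ (Fin n),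
      ‖x - γ • f' x - xs‖ ≤ max |1 - γ * m| |1 - γ * L| * ‖x - xs‖ :=
  stmt_13_general f f' m L hm hmL hgrad hstrong hlip xs hcrit
end

section
/- Let E = EuclideanSpace ℝ (Fin n), and let f : E → ℝ be twice continuously differentiable with ∇²f(x) ⪰ m·I for all x (m > 0), and with Hessian C1-Lipschitz, i.e. ‖∇²f(x) − ∇²f(y)‖ ≤ C1‖x − y‖ for all x, y. Let x* be the minimizer of f (∇f(x*) = 0). Then for every γ ∈ (0,1] and every x ∈ E, the damped Newton step satisfies ‖x − γ[∇²f(x)]^{-1}∇f(x) − x*‖ ≤ (1 − γ)‖x − x*‖ + (γC1/(2m))‖x − x*‖². -/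
/-! The Newton direction `p` at `x` differs from the exact correction `x - x*` by
`∇²f(x)⁻¹ (∇f(x) - ∇²f(x)(x - x*))`; since `∇f(x*) = 0`, the bracket is the first-order
Taylor remainder of `∇f` at `x`, which the Lipschitz bound on `∇²f` controls by
`C1/2 ‖x - x*‖²`, while strong convexity bounds `‖∇²f(x)⁻¹‖` by `1/m`. The damped step is a
convex combination of `x` and the full Newton step. -/

open scoped InnerProductSpace

open Set

section Taylor

variable {E F : Type*} [NormedAddCommGroup E] [NormedSpace ℝ E]
  [NormedAddCommGroup F] [NormedSpace ℝ F]

theorem norm_sub_sub_fderiv_le_of_lipschitz {g : E → F} {g' : E → E →L[ℝ] F} {C : ℝ}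
    (hg : ∀ z, HasFDerivAt g (g' z) z) (hlip : ∀ y z, ‖g' y - g' z‖ ≤ C * ‖y - z‖)
    (x y : E) : ‖g x - g y - g' x (x - y)‖ ≤ C / 2 * ‖x - y‖ ^ 2 := by
  set d := x - y
  set c := C * ‖d‖ ^ 2
  set h : ℝ → F := fun t => g (y + t • d) - g y - t • g' x d
  have hh : ∀ t, HasDerivAt h (g' (y + t • d) d - g' x d) t := by
    intro t
    have hline : HasDerivAt (fun t : ℝ => y + t • d) d t := by
      simpa using ((hasDerivAt_id t).smul_const d).const_add y
    have hlin : HasDerivAt (fun t : ℝ => t • g' x d) (g' x d) t := by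
      simpa using (hasDerivAt_id t).smul_const (g' x d)
    exact (((hg _).comp_hasDerivAt t hline).sub_const (g y)).sub hlin
  -- `h` starts at `0` with `‖h' t‖ ≤ c (1 - t)`, so it is fenced by `c (t - t²/2)`, worth `c/2` at `t = 1`.
  have hB : ∀ t, HasDerivAt (fun t => c * (t - t ^ 2 / 2)) (c * (1 - t)) t := by
    intro t
    refine (((hasDerivAt_id t).sub ((hasDerivAt_pow 2 t).div_const 2)).const_mul c).congr_deriv ?_
    norm_num
  have bound : ∀ t ∈ Ico (0 : ℝ) 1, ‖g' (y + t • d) d - g' x d‖ ≤ c * (1 - t) := by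
    rintro t ⟨-, ht1⟩
    have hdist : ‖y + t • d - x‖ = (1 - t) * ‖d‖ := by
      rw [show y + t • d - x = (t - 1) • d by simp only [d]; module, norm_smul,
        Real.norm_eq_abs, abs_of_nonpos (by linarith), neg_sub]
    calc ‖g' (y + t • d) d - g' x d‖ = ‖(g' (y + t • d) - g' x) d‖ := rfl
      _ ≤ ‖g' (y + t • d) - g' x‖ * ‖d‖ := ContinuousLinearMap.le_opNorm _ _
      _ ≤ C * ((1 - t) * ‖d‖) * ‖d‖ := by
          rw [← hdist]; exact mul_le_mul_of_nonneg_right (hlip _ _) (norm_nonneg _)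
      _ = c * (1 - t) := by ring
  have hfence := image_norm_le_of_norm_deriv_right_le_deriv_boundary
    (fun t _ => (hh t).continuousAt.continuousWithinAt) (fun t _ => (hh t).hasDerivWithinAt)
    (by simp [h]) hB bound (right_mem_Icc.mpr zero_le_one)
  have hend : h 1 = g x - g y - g' x d := by simp [h, d]
  rw [hend] at hfence
  linarith

end Taylor

section InnerProductSpace

variable {E : Type*} [NormedAddCommGroup E] [InnerProductSpace ℝ E]

theorem mul_norm_le_norm_apply_of_coercive {A : E →L[ℝ] E} {m : ℝ}
    (hA : ∀ v, m * ‖v‖ ^ 2 ≤ ⟪A v, v⟫_ℝ) (v : E) : m * ‖v‖ ≤ ‖A v‖ := by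
  rcases eq_or_ne v 0 with rfl | hv
  · simp
  have hv0 : 0 < ‖v‖ := norm_pos_iff.mpr hv
  have : m * ‖v‖ * ‖v‖ ≤ ‖A v‖ * ‖v‖ := by
    nlinarith [hA v, real_inner_le_norm (A v) v]
  exact le_of_mul_le_mul_right this hv0

theorem norm_newton_step_sub_le {g : E → E} {H : E → E →L[ℝ] E} {m C : ℝ} (hm : 0 < m)
    (hg : ∀ z, HasFDerivAt g (H z) z) (hcoer : ∀ z v, m * ‖v‖ ^ 2 ≤ ⟪H z v, v⟫_ℝ)
    (hlip : ∀ y z, ‖H y - H z‖ ≤ C * ‖y - z‖) {xs : E} (hxs : g xs = 0)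
    {x p : E} (hp : H x p = g x) : ‖x - p - xs‖ ≤ C / (2 * m) * ‖x - xs‖ ^ 2 := by
  have htaylor := norm_sub_sub_fderiv_le_of_lipschitz hg hlip x xs
  rw [hxs, sub_zero] at htaylor
  have hres : H x (x - p - xs) = -(g x - H x (x - xs)) := by
    rw [show x - p - xs = (x - xs) - p by abel, map_sub, hp]; abel
  have := mul_norm_le_norm_apply_of_coercive (hcoer x) (x - p - xs)
  rw [hres, norm_neg] at this
  rw [div_mul_eq_mul_div, le_div_iff₀ (by positivity)]
  linarith

end InnerProductSpace

theorem norm_sub_smul_le {E : Type*} [SeminormedAddCommGroup E] [NormedSpace ℝ E]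
    {γ : ℝ} (hγ0 : 0 ≤ γ) (hγ1 : γ ≤ 1) (d p : E) :
    ‖d - γ • p‖ ≤ (1 - γ) * ‖d‖ + γ * ‖d - p‖ := by
  calc ‖d - γ • p‖ = ‖(1 - γ) • d + γ • (d - p)‖ := by congr 1; module
    _ ≤ ‖(1 - γ) • d‖ + ‖γ • (d - p)‖ := norm_add_le _ _
    _ = (1 - γ) * ‖d‖ + γ * ‖d - p‖ := by
        rw [norm_smul, norm_smul, Real.norm_of_nonneg (by linarith), Real.norm_of_nonneg hγ0]

theorem stmt_14_general {n : ℕ}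
    (f' : EuclideanSpace ℝ (Fin n) → EuclideanSpace ℝ (Fin n))
    (Hess : EuclideanSpace ℝ (Fin n) →
      EuclideanSpace ℝ (Fin n) →L[ℝ] EuclideanSpace ℝ (Fin n))
    (m C1 : ℝ) (hm : 0 < m)
    (hhess : ∀ x, HasFDerivAt f' (Hess x) x)
    (hpsd : ∀ x v : EuclideanSpace ℝ (Fin n), m * ‖v‖ ^ 2 ≤ ⟪Hess x v, v⟫_ℝ)
    (hliphess : ∀ x y : EuclideanSpace ℝ (Fin n), ‖Hess x - Hess y‖ ≤ C1 * ‖x - y‖)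
    (xs : EuclideanSpace ℝ (Fin n))
    (hcrit : f' xs = 0) :
    ∀ γ : ℝ, 0 < γ → γ ≤ 1 → ∀ x p : EuclideanSpace ℝ (Fin n), Hess x p = f' x →
      ‖x - γ • p - xs‖ ≤ (1 - γ) * ‖x - xs‖ + (γ * C1 / (2 * m)) * ‖x - xs‖ ^ 2 := by
  intro γ hγ0 hγ1 x p hp
  have hnewton := norm_newton_step_sub_le hm hhess hpsd hliphess hcrit hp
  calc ‖x - γ • p - xs‖ = ‖(x - xs) - γ • p‖ := by congr 1; abel
    _ ≤ (1 - γ) * ‖x - xs‖ + γ * ‖x - p - xs‖ := by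
        rw [show x - p - xs = (x - xs) - p by abel]
        exact norm_sub_smul_le hγ0.le hγ1 _ _
    _ ≤ (1 - γ) * ‖x - xs‖ + (γ * C1 / (2 * m)) * ‖x - xs‖ ^ 2 := by
        have := mul_le_mul_of_nonneg_left hnewton hγ0.le
        rw [mul_div_assoc]
        linarith

/-- contraction of the damped Newton step for a function with
Hessian bounded below by m·I and C1-Lipschitz Hessian. The Newton direction
p solves ∇²f(x) p = ∇f(x). -/
theorem stmt_14 {n : ℕ} (hn : 1 ≤ n)
    (f : EuclideanSpace ℝ (Fin n) → ℝ)
    (f' : EuclideanSpace ℝ (Fin n) → EuclideanSpace ℝ (Fin n))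
    (Hess : EuclideanSpace ℝ (Fin n) →
      EuclideanSpace ℝ (Fin n) →L[ℝ] EuclideanSpace ℝ (Fin n))
    (m C1 : ℝ) (hm : 0 < m) (hC1 : 0 ≤ C1)
    (hgrad : ∀ x, HasGradientAt f (f' x) x)
    (hhess : ∀ x, HasFDerivAt f' (Hess x) x)
    (hhesscont : Continuous Hess)
    (hpsd : ∀ x v : EuclideanSpace ℝ (Fin n), m * ‖v‖ ^ 2 ≤ ⟪Hess x v, v⟫_ℝ)
    (hliphess : ∀ x y : EuclideanSpace ℝ (Fin n), ‖Hess x - Hess y‖ ≤ C1 * ‖x - y‖)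
    (xs : EuclideanSpace ℝ (Fin n))
    (hmin : IsMinOn f Set.univ xs) (hcrit : f' xs = 0) :
    ∀ γ : ℝ, 0 < γ → γ ≤ 1 → ∀ x p : EuclideanSpace ℝ (Fin n), Hess x p = f' x →
      ‖x - γ • p - xs‖ ≤ (1 - γ) * ‖x - xs‖ + (γ * C1 / (2 * m)) * ‖x - xs‖ ^ 2 :=
  stmt_14_general f' Hess m C1 hm hhess hpsd hliphess xs hcrit
end

section
/- Let E = EuclideanSpace ℝ (Fin n), and let f : E → ℝ be twice continuously differentiable with m·I ⪯ ∇²f(x) ⪯ L'·I for all x (0 < m ≤ L'), and with Hessian C1-Lipschitz, i.e. ‖∇²f(x) − ∇²f(y)‖ ≤ C1‖x − y‖ for all x, y. Let x* be the minimizer of f (∇f(x*) = 0). Let Ĥ be a linear map on E with ‖id − ∇²f(x) ∘ Ĥ‖ ≤ ε. Then for every γ ∈ (0,1] and every x ∈ E, the approximate damped Newton step satisfies ‖x − γ·Ĥ(∇f(x)) − x*‖ ≤ (1 − γ + γL'ε/m)‖x − x*‖ + (γC1/(2m))‖x − x*‖². -/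
/-!
Write `d = x - x*` and `g = ∇f(x)`, so that the step error is `(1 - γ) d + γ (d - Ĥ g)`. Strong
convexity makes `H = ∇²f(x)` satisfy `m ‖v‖ ≤ ‖H v‖`, hence
`m ‖d - Ĥ g‖ ≤ ‖H d - g‖ + ‖(id - H Ĥ) g‖`. The first term is the Taylor remainder of `∇f` between
`x*` and `x`, at most `C₁/2 ‖d‖²` because `∇²f` is `C₁`-Lipschitz; the second is at most `ε ‖g‖`,
and `‖g‖ = ‖∇f(x) - ∇f(x*)‖ ≤ L' ‖d‖` because the symmetric operators `∇²f` have norm at most `L'`.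
-/

open scoped InnerProductSpace

open Set

section InnerProduct

variable {E : Type*} [NormedAddCommGroup E] [InnerProductSpace ℝ E]

theorem isSymmetric_of_hasFDerivAt_gradient [CompleteSpace E] {f : E → ℝ} {f' : E → E}
    {H : E →L[ℝ] E} {x : E} (hf : ∀ y, HasGradientAt f (f' y) y) (hH : HasFDerivAt f' H x) :
    (H : E →ₗ[ℝ] E).IsSymmetric := by
  intro v w
  have hf' : ∀ y, HasFDerivAt f (innerSL ℝ (f' y)) y := fun y =>
    hasGradientAt_iff_hasFDerivAt.mp (hf y)
  exact (second_derivative_symmetric hf' ((innerSL ℝ).hasFDerivAt.comp x hH) v w).trans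
    (real_inner_comm v (H w))

theorem opNorm_le_of_abs_inner_le {T : E →L[ℝ] E} {L : ℝ} (hL : 0 ≤ L)
    (hT : (T : E →ₗ[ℝ] E).IsSymmetric) (hle : ∀ v, |⟪T v, v⟫_ℝ| ≤ L * ‖v‖ ^ 2) : ‖T‖ ≤ L := by
  rw [T.norm_eq_iSup_rayleighQuotient hT]
  refine ciSup_le fun v => ?_
  rcases eq_or_ne v 0 with rfl | hv
  · simpa using hL
  rw [ContinuousLinearMap.rayleighQuotient, ContinuousLinearMap.reApplyInnerSelf_apply,
    RCLike.re_to_real, abs_div, abs_sq, div_le_iff₀ (by positivity)]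
  exact hle v

theorem mul_norm_le_norm_apply_of_mul_sq_le_inner {T : E →L[ℝ] E} {m : ℝ}
    (hm : ∀ v, m * ‖v‖ ^ 2 ≤ ⟪T v, v⟫_ℝ) (v : E) : m * ‖v‖ ≤ ‖T v‖ := by
  rcases eq_or_ne v 0 with rfl | hv
  · simp
  refine le_of_mul_le_mul_right ?_ (norm_pos_iff.mpr hv)
  calc m * ‖v‖ * ‖v‖ = m * ‖v‖ ^ 2 := by ring
    _ ≤ ⟪T v, v⟫_ℝ := hm v
    _ ≤ ‖T v‖ * ‖v‖ := real_inner_le_norm _ _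

end InnerProduct

section Normed

variable {E F : Type*} [NormedAddCommGroup E] [NormedSpace ℝ E] [NormedAddCommGroup F]
  [NormedSpace ℝ F]

theorem norm_image_sub_sub_apply_le_of_lipschitz {g : E → F} {H : E → E →L[ℝ] F} {C : ℝ}
    (hg : ∀ x, HasFDerivAt g (H x) x) (hH : ∀ x y, ‖H x - H y‖ ≤ C * ‖x - y‖) (a b : E) :
    ‖g b - g a - H b (b - a)‖ ≤ C / 2 * ‖b - a‖ ^ 2 := by
  set d := b - a
  set φ : ℝ → F := fun t => g (a + t • d) - g a - t • H b d
  set B : ℝ → ℝ := fun t => C * ‖d‖ ^ 2 * (t - t ^ 2 / 2)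
  have hφ : ∀ t, HasDerivAt φ (H (a + t • d) d - H b d) t := fun t => by
    have hline : HasDerivAt (fun s : ℝ => a + s • d) d t := by
      simpa using ((hasDerivAt_id t).smul_const d).const_add a
    exact (((hg _).comp_hasDerivAt t hline).sub_const (g a)).sub
      ((hasDerivAt_id t).smul_const (H b d)) |>.congr_deriv (by simp)
  have hB : ∀ t, HasDerivAt B (C * ‖d‖ ^ 2 * (1 - t)) t := fun t =>
    (((hasDerivAt_id t).sub ((hasDerivAt_pow 2 t).div_const 2)).const_mul
      (C * ‖d‖ ^ 2)).congr_deriv (by simp)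
  have hbound : ∀ t ∈ Ico (0 : ℝ) 1, ‖H (a + t • d) d - H b d‖ ≤ C * ‖d‖ ^ 2 * (1 - t) := by
    rintro t ⟨-, ht1⟩
    have hdist : a + t • d - b = -((1 - t) • d) := by simp only [d]; module
    calc ‖H (a + t • d) d - H b d‖ = ‖(H (a + t • d) - H b) d‖ := by simp
      _ ≤ C * ‖a + t • d - b‖ * ‖d‖ := ((H _ - H b).le_opNorm d).trans
          (mul_le_mul_of_nonneg_right (hH _ _) (norm_nonneg d))
      _ = C * ‖d‖ ^ 2 * (1 - t) := by
          rw [hdist, norm_neg, norm_smul, Real.norm_of_nonneg (by linarith)]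
          ring
  have := image_norm_le_of_norm_deriv_right_le_deriv_boundary
    (fun t _ => (hφ t).continuousAt.continuousWithinAt) (fun t _ => (hφ t).hasDerivWithinAt)
    (by simp [φ, B]) hB hbound (right_mem_Icc.mpr zero_le_one)
  convert this using 1
  · simp [φ, d]
  · simp only [B]
    ring

theorem norm_sub_smul_apply_sub_le_s15 {H Hhat : E →L[ℝ] E} {m γ : ℝ} (hm : 0 < m)
    (hH : ∀ v, m * ‖v‖ ≤ ‖H v‖) (hγ0 : 0 ≤ γ) (hγ1 : γ ≤ 1) (x xs g : E) :
    ‖x - γ • Hhat g - xs‖ ≤ (1 - γ) * ‖x - xs‖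
      + γ / m * (‖H (x - xs) - g‖ + ‖ContinuousLinearMap.id ℝ E - H.comp Hhat‖ * ‖g‖) := by
  set e := x - xs - Hhat g
  have hdecomp : x - γ • Hhat g - xs = (1 - γ) • (x - xs) + γ • e := by simp only [e]; module
  have hHe : H e = (H (x - xs) - g) + (ContinuousLinearMap.id ℝ E - H.comp Hhat) g := by
    simp only [e, map_sub, sub_apply, ContinuousLinearMap.id_apply,
      ContinuousLinearMap.comp_apply]
    abel
  have he : ‖e‖ ≤ (‖H (x - xs) - g‖ + ‖ContinuousLinearMap.id ℝ E - H.comp Hhat‖ * ‖g‖) / m := by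
    rw [le_div_iff₀ hm, mul_comm]
    exact (hH e).trans (hHe ▸ norm_add_le_of_le le_rfl (ContinuousLinearMap.le_opNorm _ _))
  calc ‖x - γ • Hhat g - xs‖ ≤ ‖(1 - γ) • (x - xs)‖ + ‖γ • e‖ := hdecomp ▸ norm_add_le _ _
    _ = (1 - γ) * ‖x - xs‖ + γ * ‖e‖ := by
        rw [norm_smul, norm_smul, Real.norm_of_nonneg (by linarith), Real.norm_of_nonneg hγ0]
    _ ≤ _ := by
        rw [div_mul_eq_mul_div, mul_div_assoc]
        gcongr

end Normed

theorem stmt_15_general {n : ℕ}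
    (f : EuclideanSpace ℝ (Fin n) → ℝ)
    (f' : EuclideanSpace ℝ (Fin n) → EuclideanSpace ℝ (Fin n))
    (Hess : EuclideanSpace ℝ (Fin n) →
      EuclideanSpace ℝ (Fin n) →L[ℝ] EuclideanSpace ℝ (Fin n))
    (m L' C1 ε : ℝ) (hm : 0 < m) (hmL : m ≤ L')
    (hgrad : ∀ x, HasGradientAt f (f' x) x)
    (hhess : ∀ x, HasFDerivAt f' (Hess x) x)
    (hlow : ∀ x v : EuclideanSpace ℝ (Fin n), m * ‖v‖ ^ 2 ≤ ⟪Hess x v, v⟫_ℝ)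
    (hup : ∀ x v : EuclideanSpace ℝ (Fin n), ⟪Hess x v, v⟫_ℝ ≤ L' * ‖v‖ ^ 2)
    (hliphess : ∀ x y : EuclideanSpace ℝ (Fin n), ‖Hess x - Hess y‖ ≤ C1 * ‖x - y‖)
    (xs : EuclideanSpace ℝ (Fin n))
    (hcrit : f' xs = 0) :
    ∀ γ : ℝ, 0 < γ → γ ≤ 1 → ∀ x : EuclideanSpace ℝ (Fin n),
      ∀ Hhat : EuclideanSpace ℝ (Fin n) →L[ℝ] EuclideanSpace ℝ (Fin n),
        ‖ContinuousLinearMap.id ℝ (EuclideanSpace ℝ (Fin n)) - (Hess x).comp Hhat‖ ≤ ε →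
          ‖x - γ • Hhat (f' x) - xs‖
            ≤ (1 - γ + γ * L' * ε / m) * ‖x - xs‖ + (γ * C1 / (2 * m)) * ‖x - xs‖ ^ 2 := by
  intro γ hγ0 hγ1 x Hhat hHhat
  have hL' : 0 ≤ L' := hm.le.trans hmL
  have hHess_norm : ∀ y, ‖Hess y‖ ≤ L' := fun y =>
    opNorm_le_of_abs_inner_le hL' (isSymmetric_of_hasFDerivAt_gradient hgrad (hhess y)) fun v =>
      abs_le.mpr ⟨by nlinarith [hlow y v, sq_nonneg ‖v‖], hup y v⟩
  have hgrad_le : ‖f' x‖ ≤ L' * ‖x - xs‖ := by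
    simpa [hcrit] using convex_univ.norm_image_sub_le_of_norm_hasFDerivWithin_le
      (fun y _ => (hhess y).hasFDerivWithinAt) (fun y _ => hHess_norm y) (mem_univ xs) (mem_univ x)
  have htaylor : ‖Hess x (x - xs) - f' x‖ ≤ C1 / 2 * ‖x - xs‖ ^ 2 := by
    simpa [hcrit, norm_sub_rev] using norm_image_sub_sub_apply_le_of_lipschitz hhess hliphess xs x
  have happrox : ‖ContinuousLinearMap.id ℝ _ - (Hess x).comp Hhat‖ * ‖f' x‖
      ≤ ε * (L' * ‖x - xs‖) :=
    (mul_le_mul_of_nonneg_left hgrad_le (norm_nonneg _)).trans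
      (mul_le_mul_of_nonneg_right hHhat (by positivity))
  calc ‖x - γ • Hhat (f' x) - xs‖
      ≤ (1 - γ) * ‖x - xs‖ + γ / m * (C1 / 2 * ‖x - xs‖ ^ 2 + ε * (L' * ‖x - xs‖)) :=
        (norm_sub_smul_apply_sub_le_s15 hm (mul_norm_le_norm_apply_of_mul_sq_le_inner (hlow x))
          hγ0.le hγ1 x xs (f' x)).trans (by gcongr)
    _ = (1 - γ + γ * L' * ε / m) * ‖x - xs‖ + (γ * C1 / (2 * m)) * ‖x - xs‖ ^ 2 := by
        field_simp
        ring

/-- key estimate for the approximate damped Newton correction step,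
where Hhat approximates the Hessian inverse with relative error ε. -/
theorem stmt_15 {n : ℕ} (hn : 1 ≤ n)
    (f : EuclideanSpace ℝ (Fin n) → ℝ)
    (f' : EuclideanSpace ℝ (Fin n) → EuclideanSpace ℝ (Fin n))
    (Hess : EuclideanSpace ℝ (Fin n) →
      EuclideanSpace ℝ (Fin n) →L[ℝ] EuclideanSpace ℝ (Fin n))
    (m L' C1 ε : ℝ) (hm : 0 < m) (hmL : m ≤ L') (hC1 : 0 ≤ C1) (hε : 0 ≤ ε)
    (hgrad : ∀ x, HasGradientAt f (f' x) x)
    (hhess : ∀ x, HasFDerivAt f' (Hess x) x)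
    (hhesscont : Continuous Hess)
    (hlow : ∀ x v : EuclideanSpace ℝ (Fin n), m * ‖v‖ ^ 2 ≤ ⟪Hess x v, v⟫_ℝ)
    (hup : ∀ x v : EuclideanSpace ℝ (Fin n), ⟪Hess x v, v⟫_ℝ ≤ L' * ‖v‖ ^ 2)
    (hliphess : ∀ x y : EuclideanSpace ℝ (Fin n), ‖Hess x - Hess y‖ ≤ C1 * ‖x - y‖)
    (xs : EuclideanSpace ℝ (Fin n))
    (hmin : IsMinOn f Set.univ xs) (hcrit : f' xs = 0) :
    ∀ γ : ℝ, 0 < γ → γ ≤ 1 → ∀ x : EuclideanSpace ℝ (Fin n),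
      ∀ Hhat : EuclideanSpace ℝ (Fin n) →L[ℝ] EuclideanSpace ℝ (Fin n),
        ‖ContinuousLinearMap.id ℝ (EuclideanSpace ℝ (Fin n)) - (Hess x).comp Hhat‖ ≤ ε →
          ‖x - γ • Hhat (f' x) - xs‖
            ≤ (1 - γ + γ * L' * ε / m) * ‖x - xs‖ + (γ * C1 / (2 * m)) * ‖x - xs‖ ^ 2 :=
  stmt_15_general f f' Hess m L' C1 ε hm hmL hgrad hhess hlow hup hliphess xs hcrit
end

section
/- Let (a_k)_{k≥0} be a sequence of nonnegative reals, and let α₀, α₁ ≥ 0, α₂ > 0 and τ ∈ (0,1) be such that a_{k+1} ≤ α₂ a_k² + α₁ a_k + α₀ for all k. Suppose α₁ < τ, a_0 ≤ (τ − α₁)/α₂, and τ·(τ − α₁)/α₂ + α₀ ≤ (τ − α₁)/α₂. Then for every k ≥ 0, a_k ≤ (τ − α₁)/α₂ and a_k ≤ τ^k a_0 + α₀ (1 − τ^k)/(1 − τ); in particular limsup_{k→∞} a_k ≤ α₀/(1 − τ). -/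
/-!
Inside the region `a ≤ (τ - α₁) / α₂` the quadratic term is dominated by the linear one,
`α₂ a² + α₁ a ≤ τ a`, so the recursion becomes the affine contraction `a_{k+1} ≤ τ a_k + α₀`.
The last hypothesis says exactly that this contraction maps the region into itself, so the
sequence never leaves it, and unrolling the contraction gives the geometric bound, whose limit
is `α₀ / (1 - τ)`.
-/

open Filter Topology

lemma quadratic_le_mul_add {α₀ α₁ α₂ τ x : ℝ} (hα₂ : 0 < α₂) (hx : 0 ≤ x)
    (hxr : x ≤ (τ - α₁) / α₂) : α₂ * x ^ 2 + α₁ * x + α₀ ≤ τ * x + α₀ := by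
  have hα₂x : α₂ * x ≤ τ - α₁ := by rwa [le_div_iff₀' hα₂] at hxr
  nlinarith [mul_le_mul_of_nonneg_right hα₂x hx]

section AffineRecursion

variable {a : ℕ → ℝ} {τ β r : ℝ}

lemma forall_le_of_le_mul_add (hτ : 0 ≤ τ) (hr : τ * r + β ≤ r) (h0 : a 0 ≤ r)
    (hstep : ∀ k, a k ≤ r → a (k + 1) ≤ τ * a k + β) (k : ℕ) : a k ≤ r := by
  induction k with
  | zero => exact h0
  | succ k ih =>
    calc a (k + 1) ≤ τ * a k + β := hstep k ih
      _ ≤ τ * r + β := by gcongr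
      _ ≤ r := hr

lemma le_geometric_of_le_mul_add (hτ : 0 ≤ τ) (hτ1 : τ ≠ 1)
    (hstep : ∀ k, a (k + 1) ≤ τ * a k + β) (k : ℕ) :
    a k ≤ τ ^ k * a 0 + β * (1 - τ ^ k) / (1 - τ) := by
  have h1τ : 1 - τ ≠ 0 := sub_ne_zero.mpr hτ1.symm
  induction k with
  | zero => simp
  | succ k ih =>
    calc a (k + 1) ≤ τ * a k + β := hstep k
      _ ≤ τ * (τ ^ k * a 0 + β * (1 - τ ^ k) / (1 - τ)) + β := by gcongr
      _ = τ ^ (k + 1) * a 0 + β * (1 - τ ^ (k + 1)) / (1 - τ) := by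
        field_simp
        ring

lemma tendsto_geometric_bound (hτ : 0 ≤ τ) (hτ1 : τ < 1) (a₀ : ℝ) :
    Tendsto (fun k : ℕ ↦ τ ^ k * a₀ + β * (1 - τ ^ k) / (1 - τ)) atTop (𝓝 (β / (1 - τ))) := by
  have hpow := tendsto_pow_atTop_nhds_zero_of_lt_one hτ hτ1
  have h := ((hpow.mul_const a₀).add (((hpow.const_sub 1).const_mul β).div_const (1 - τ)))
  simpa using h

end AffineRecursion

lemma limsup_le_of_le_of_tendsto {a b : ℕ → ℝ} {L c : ℝ} (hc : ∀ k, c ≤ a k)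
    (hab : ∀ k, a k ≤ b k) (hb : Tendsto b atTop (𝓝 L)) : limsup a atTop ≤ L := by
  rw [← hb.limsup_eq]
  exact limsup_le_limsup (.of_forall hab) (isCoboundedUnder_le_of_le atTop hc)
    hb.isBoundedUnder_le

theorem stmt_17_general (a : ℕ → ℝ) (α₀ α₁ α₂ τ : ℝ)
    (ha : ∀ k, 0 ≤ a k)
    (hα₂ : 0 < α₂)
    (hτ0 : 0 < τ) (hτ1 : τ < 1)
    (hrec : ∀ k, a (k + 1) ≤ α₂ * (a k) ^ 2 + α₁ * a k + α₀)
    (h2 : a 0 ≤ (τ - α₁) / α₂)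
    (h3 : τ * ((τ - α₁) / α₂) + α₀ ≤ (τ - α₁) / α₂) :
    (∀ k, a k ≤ (τ - α₁) / α₂ ∧ a k ≤ τ ^ k * a 0 + α₀ * (1 - τ ^ k) / (1 - τ))
      ∧ Filter.limsup a Filter.atTop ≤ α₀ / (1 - τ) := by
  have hstep k (hk : a k ≤ (τ - α₁) / α₂) : a (k + 1) ≤ τ * a k + α₀ :=
    (hrec k).trans (quadratic_le_mul_add hα₂ (ha k) hk)
  have hregion := forall_le_of_le_mul_add hτ0.le h3 h2 hstep
  have hgeom := le_geometric_of_le_mul_add hτ0.le hτ1.ne fun k ↦ hstep k (hregion k)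
  exact ⟨fun k ↦ ⟨hregion k, hgeom k⟩,
    limsup_le_of_le_of_tendsto ha hgeom (tendsto_geometric_bound hτ0.le hτ1 (a 0))⟩

/-- quadratic error recursion lemma (engine of Theorem 2). -/
theorem stmt_17 (a : ℕ → ℝ) (α₀ α₁ α₂ τ : ℝ)
    (ha : ∀ k, 0 ≤ a k)
    (hα₀ : 0 ≤ α₀) (hα₁ : 0 ≤ α₁) (hα₂ : 0 < α₂)
    (hτ0 : 0 < τ) (hτ1 : τ < 1)
    (hrec : ∀ k, a (k + 1) ≤ α₂ * (a k) ^ 2 + α₁ * a k + α₀)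
    (h1 : α₁ < τ)
    (h2 : a 0 ≤ (τ - α₁) / α₂)
    (h3 : τ * ((τ - α₁) / α₂) + α₀ ≤ (τ - α₁) / α₂) :
    (∀ k, a k ≤ (τ - α₁) / α₂ ∧ a k ≤ τ ^ k * a 0 + α₀ * (1 - τ ^ k) / (1 - τ))
      ∧ Filter.limsup a Filter.atTop ≤ α₀ / (1 - τ) :=
  stmt_17_general a α₀ α₁ α₂ τ ha hα₂ hτ0 hτ1 hrec h2 h3
end
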